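/- arXiv:2503.09473 — 11 statements merged into one kernel-verified Lean document; each statement's English description precedes it below -/
import Mathlib

section
/- Let f(λ0, λ1) = (1/2)·(λ0^6 + λ1^6 + 3·λ0^4·λ1^2 + 2·λ0^3·λ1^3). Then the maximum of f over all real λ0, λ1 with λ0 ≥ 0, λ1 ≥ 0 and λ0^2 + λ1^2 = 1 equals (5 + 4·cos(2π/7)) / (12 + 4·cos(2π/7)). That is, (5 + 4·cos(2π/7)) / (12 + 4·cos(2π/7)) is the greatest element of the set { f(λ0,λ1) : λ0 ≥ 0, λ1 ≥ 0, λ0^2 + λ1^2 = 1 }. -/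
/-- The maximum of
`f(λ0, λ1) = (1/2)·(λ0^6 + λ1^6 + 3·λ0^4·λ1^2 + 2·λ0^3·λ1^3)` over all nonnegative reals
with `λ0^2 + λ1^2 = 1` equals `(5 + 4·cos(2π/7)) / (12 + 4·cos(2π/7))`. -/
theorem optimal_fidelity_dout2_din2 :
    IsGreatest
      {y : ℝ | ∃ l0 l1 : ℝ, 0 ≤ l0 ∧ 0 ≤ l1 ∧ l0 ^ 2 + l1 ^ 2 = 1 ∧
        y = (1 / 2) * (l0 ^ 6 + l1 ^ 6 + 3 * l0 ^ 4 * l1 ^ 2 + 2 * l0 ^ 3 * l1 ^ 3)}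
      ((5 + 4 * Real.cos (2 * Real.pi / 7)) / (12 + 4 * Real.cos (2 * Real.pi / 7))) := by
  have pi_pos := Real.pi_pos
  set c : ℝ := Real.cos (2 * Real.pi / 7) with hc
  -- minimal polynomial of cos(2π/7)
  have hmin : 8 * c ^ 3 + 4 * c ^ 2 - 4 * c - 1 = 0 := by
    have h1 : Real.cos (4 * (2 * Real.pi / 7)) = Real.cos (3 * (2 * Real.pi / 7)) := by
      rw [show (4 : ℝ) * (2 * Real.pi / 7) = 2 * Real.pi - 3 * (2 * Real.pi / 7) by ring]
      exact Real.cos_two_pi_sub _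
    have h3 : Real.cos (3 * (2 * Real.pi / 7)) = 4 * c ^ 3 - 3 * c := Real.cos_three_mul _
    have h4 : Real.cos (4 * (2 * Real.pi / 7)) = 2 * (2 * c ^ 2 - 1) ^ 2 - 1 := by
      rw [show (4 : ℝ) * (2 * Real.pi / 7) = 2 * (2 * (2 * Real.pi / 7)) by ring,
        Real.cos_two_mul, Real.cos_two_mul]
    have hlt : c < 1 := by
      have := Real.cos_lt_cos_of_nonneg_of_le_pi (le_refl 0)
        (by linarith : 2 * Real.pi / 7 ≤ Real.pi) (by linarith : (0:ℝ) < 2 * Real.pi / 7)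
      simpa [Real.cos_zero] using this
    have hfac : (c - 1) * (8 * c ^ 3 + 4 * c ^ 2 - 4 * c - 1) = 0 := by
      rw [h4, h3] at h1; nlinarith [h1]
    have := mul_eq_zero.mp hfac
    rcases this with h | h
    · exact absurd h (by intro h'; nlinarith)
    · exact h
  have hcpos : 0 < c := Real.cos_pos_of_mem_Ioo ⟨by nlinarith, by nlinarith⟩
  have hub : c < 63 / 100 := by nlinarith [Real.cos_le_one (2 * Real.pi / 7)]
  have hlb : 62 / 100 < c := by nlinarith [Real.cos_le_one (2 * Real.pi / 7)]
  constructor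
  · -- membership: witness l0 = 1/r, l1 = t/r with t = 2 - 4c², r = sqrt(1+t²)
    set t : ℝ := 2 - 4 * c ^ 2 with ht
    have ht0 : 0 < t := by nlinarith
    have hrpos : 0 < Real.sqrt (1 + t ^ 2) := Real.sqrt_pos.mpr (by positivity)
    set r : ℝ := Real.sqrt (1 + t ^ 2) with hr
    have hr2 : r ^ 2 = 1 + t ^ 2 := Real.sq_sqrt (by positivity)
    have hrne : r ≠ 0 := ne_of_gt hrpos
    refine ⟨1 / r, t / r, by positivity, by positivity, ?_, ?_⟩
    · field_simp
      linarith [hr2]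
    · have h12 : (12 : ℝ) + 4 * c ≠ 0 := by positivity
      have hr6 : r ^ 6 = (1 + t ^ 2) ^ 3 := by
        rw [show r ^ 6 = (r ^ 2) ^ 3 by ring, hr2]
      have hval : (1 / r) ^ 6 + (t / r) ^ 6 + 3 * (1 / r) ^ 4 * (t / r) ^ 2
          + 2 * (1 / r) ^ 3 * (t / r) ^ 3
          = (1 + t ^ 6 + 3 * t ^ 2 + 2 * t ^ 3) / (1 + t ^ 2) ^ 3 := by
        rw [← hr6]; field_simp
      rw [hval, ht]
      have hDne : ((1 + (2 - 4 * c ^ 2) ^ 2) ^ 3 : ℝ) ≠ 0 := by positivity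
      field_simp
      ring_nf
      linear_combination (-(134:ℝ) - 92 * c + 888 * c ^ 2 + 960 * c ^ 3
        - 2464 * c ^ 4 - 3200 * c ^ 5 + 3968 * c ^ 6 + 4352 * c ^ 7
        - 4096 * c ^ 8 - 2048 * c ^ 9 + 2048 * c ^ 10) * hmin
  · -- upper bound
    rintro y ⟨l0, l1, h0, h1, hs, rfl⟩
    have h12 : (0 : ℝ) < 12 + 4 * c := by linarith
    rw [le_div_iff₀ h12]
    have hQ : 0 ≤ 2 * c * l0 ^ 4 + (4 * c + 8 * c ^ 2) * l0 ^ 3 * l1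
        + (3 + 24 * c + 12 * c ^ 2) * l0 ^ 2 * l1 ^ 2 + (16 * c ^ 2 - 6) * l0 * l1 ^ 3
        + (2 * c - 1) * l1 ^ 4 := by
      have h16 : (0:ℝ) ≤ 16 * c ^ 2 - 6 := by nlinarith
      have e1 : (0:ℝ) ≤ 2 * c * l0 ^ 4 := by positivity
      have e2 : (0:ℝ) ≤ (4 * c + 8 * c ^ 2) * l0 ^ 3 * l1 := by positivity
      have e3 : (0:ℝ) ≤ (3 + 24 * c + 12 * c ^ 2) * l0 ^ 2 * l1 ^ 2 := by positivity
      have e4 : (0:ℝ) ≤ (16 * c ^ 2 - 6) * l0 * l1 ^ 3 := by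
        apply mul_nonneg (mul_nonneg h16 h0) (by positivity)
      have e5 : (0:ℝ) ≤ (2 * c - 1) * l1 ^ 4 := by
        apply mul_nonneg (by linarith) (by positivity)
      linarith
    have hid : (2 * c - 1) * (l0 ^ 2 + l1 ^ 2) ^ 3
        - (6 + 2 * c) * (2 * l0 ^ 3 * l1 ^ 3 - 3 * l0 ^ 2 * l1 ^ 4)
        = (l1 - (2 - 4 * c ^ 2) * l0) ^ 2 *
          (2 * c * l0 ^ 4 + (4 * c + 8 * c ^ 2) * l0 ^ 3 * l1
            + (3 + 24 * c + 12 * c ^ 2) * l0 ^ 2 * l1 ^ 2 + (16 * c ^ 2 - 6) * l0 * l1 ^ 3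
            + (2 * c - 1) * l1 ^ 4) := by
      linear_combination ((1 + 2 * c - 4 * c ^ 2) * l0 ^ 6 + (8 * c - 16 * c ^ 3) * l0 ^ 5 * l1
        + (15 + 16 * c - 36 * c ^ 2 - 24 * c ^ 3) * l0 ^ 4 * l1 ^ 2
        + (-24 + 8 * c + 16 * c ^ 2 - 32 * c ^ 3) * l0 ^ 3 * l1 ^ 3
        + (8 - 12 * c - 4 * c ^ 2) * l0 ^ 2 * l1 ^ 4 + (-2) * l0 * l1 ^ 5) * hmin
    have key : 0 ≤ (2 * c - 1) * (l0 ^ 2 + l1 ^ 2) ^ 3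
        - (6 + 2 * c) * (2 * l0 ^ 3 * l1 ^ 3 - 3 * l0 ^ 2 * l1 ^ 4) := by
      rw [hid]; exact mul_nonneg (sq_nonneg _) hQ
    have hcube : (l0 ^ 2 + l1 ^ 2) ^ 3 = 1 := by rw [hs]; norm_num
    have h5 : (5 + 4 * c) * (1 - (l0 ^ 2 + l1 ^ 2) ^ 3) = 0 := by rw [hcube]; ring
    nlinarith [key, h5]
end

section
/- Let G be a connected simple graph on a finite vertex set V and let v ∈ V be an articulation point of G, i.e., the induced subgraph of G on V \ {v} is not connected (there exist vertices x ≠ v and y ≠ v with no path between them avoiding v). Let τ_v(G) denote the local complementation of G at v. Then the induced subgraph of τ_v(G) on V \ {v} is connected; in particular, v is not an articulation point of τ_v(G). -/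
/-- Local complementation of a simple graph `G` at a vertex `v`: distinct vertices `x, y`
are adjacent iff (`x ~ y` in `G`) XOR (both `x` and `y` are neighbors of `v` in `G`). -/
def localComp {V : Type*} (G : SimpleGraph V) (v : V) : SimpleGraph V where
  Adj x y := x ≠ y ∧ Xor' (G.Adj x y) (G.Adj x v ∧ G.Adj y v)
  symm := by
    constructor
    intro x y h
    obtain ⟨hxy, h⟩ := h
    refine ⟨hxy.symm, ?_⟩
    unfold Xor' at h ⊢
    have := G.adj_comm x y
    rw [this, and_comm] at h
    exact h
  loopless := by
    constructor
    intro x h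
    exact h.1 rfl

/-!
Write `H` and `T` for the subgraphs of `G` and of `τ_v(G)` induced on `V \ {v}`. An edge of
`H` with an endpoint outside `N(v)` survives in `T`, so walking from `x` towards `v` reaches
a neighbor of `v` in the same `H`-component of `x`, along a path of `T`. Two neighbors of `v`
in different `H`-components are non-adjacent in `G`, hence adjacent in `T`. As `v` is an
articulation point, `N(v)` meets at least two `H`-components, so all of `N(v)` lies in one
`T`-component, and this component contains every vertex.
-/

namespace SimpleGraph

variable {V : Type*} {G : SimpleGraph V} {v : V}

lemma localComp_induce_adj_of_induce_adj_of_not_adj {x y : {w : V | w ≠ v}}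
    (hxy : (G.induce {w | w ≠ v}).Adj x y) (hx : ¬ G.Adj x v) :
    ((localComp G v).induce {w | w ≠ v}).Adj x y :=
  ⟨G.ne_of_adj hxy, Or.inl ⟨hxy, fun h => hx h.1⟩⟩

lemma localComp_induce_adj_of_not_reachable {a b : {w : V | w ≠ v}} (ha : G.Adj a v)
    (hb : G.Adj b v) (hab : ¬ (G.induce {w | w ≠ v}).Reachable a b) :
    ((localComp G v).induce {w | w ≠ v}).Adj a b :=
  ⟨fun h => hab (Subtype.ext h ▸ .rfl), Or.inr ⟨⟨ha, hb⟩, fun h => hab (Adj.reachable h)⟩⟩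

lemma Connected.exists_adj_reachable_induce_localComp (hconn : G.Connected)
    (x : {w : V | w ≠ v}) :
    ∃ b : {w : V | w ≠ v}, G.Adj b v ∧ (G.induce {w | w ≠ v}).Reachable x b ∧
      ((localComp G v).induce {w | w ≠ v}).Reachable x b := by
  by_contra! hnone
  let S : Set V := {y | ∃ hy : y ≠ v, (G.induce {w | w ≠ v}).Reachable x ⟨y, hy⟩ ∧
    ((localComp G v).induce {w | w ≠ v}).Reachable x ⟨y, hy⟩}
  obtain ⟨d, -, ⟨hfst, hHfst, hTfst⟩, hsnd⟩ :=
    (hconn.preconnected x v).some.exists_boundary_dart S ⟨x.2, .rfl, .rfl⟩ (by simp [S])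
  have hfst_v : ¬ G.Adj d.fst v := fun h => hnone ⟨d.fst, hfst⟩ h hHfst hTfst
  have hsnd_v : d.snd ≠ v := by rintro hd; exact hfst_v (hd ▸ d.adj)
  have hH : (G.induce {w | w ≠ v}).Adj ⟨d.fst, hfst⟩ ⟨d.snd, hsnd_v⟩ := d.adj
  exact hsnd ⟨hsnd_v, hHfst.trans hH.reachable,
    hTfst.trans (localComp_induce_adj_of_induce_adj_of_not_adj hH hfst_v).reachable⟩

lemma localComp_induce_reachable_of_adj_of_not_reachable {b₁ b₂ : {w : V | w ≠ v}}
    (hb₁ : G.Adj b₁ v) (hb₂ : G.Adj b₂ v) (hb₁₂ : ¬ (G.induce {w | w ≠ v}).Reachable b₁ b₂)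
    {a : {w : V | w ≠ v}} (ha : G.Adj a v) :
    ((localComp G v).induce {w | w ≠ v}).Reachable a b₁ := by
  by_cases hab₁ : (G.induce {w | w ≠ v}).Reachable a b₁
  · have hab₂ : ¬ (G.induce {w | w ≠ v}).Reachable a b₂ := fun h => hb₁₂ (hab₁.symm.trans h)
    exact (localComp_induce_adj_of_not_reachable ha hb₂ hab₂).reachable.trans
      (localComp_induce_adj_of_not_reachable hb₂ hb₁ (fun h => hb₁₂ h.symm)).reachable
  · exact (localComp_induce_adj_of_not_reachable ha hb₁ hab₁).reachable

end SimpleGraph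

theorem localComp_kills_articulation_point_general {V : Type*}
    (G : SimpleGraph V) (v : V) (hconn : G.Connected)
    (hart : ∃ x y : {w : V | w ≠ v}, ¬ (G.induce {w : V | w ≠ v}).Reachable x y) :
    ((localComp G v).induce {w : V | w ≠ v}).Connected := by
  obtain ⟨x₀, y₀, hxy₀⟩ := hart
  obtain ⟨b₁, hb₁, hxb₁, -⟩ := hconn.exists_adj_reachable_induce_localComp x₀
  obtain ⟨b₂, hb₂, hyb₂, -⟩ := hconn.exists_adj_reachable_induce_localComp y₀
  have hb₁₂ : ¬ (G.induce {w | w ≠ v}).Reachable b₁ b₂ :=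
    fun h => hxy₀ (hxb₁.trans (h.trans hyb₂.symm))
  have reach_b₁ (x : {w : V | w ≠ v}) :
      ((localComp G v).induce {w | w ≠ v}).Reachable x b₁ := by
    obtain ⟨b, hb, -, hxb⟩ := hconn.exists_adj_reachable_induce_localComp x
    exact hxb.trans
      (SimpleGraph.localComp_induce_reachable_of_adj_of_not_reachable hb₁ hb₂ hb₁₂ hb)
  exact (SimpleGraph.connected_iff _).2 ⟨fun x y => (reach_b₁ x).trans (reach_b₁ y).symm, ⟨b₁⟩⟩

/-- If `G` is connected and `v` is an articulation point of `G` (there are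
vertices `x ≠ v`, `y ≠ v` with no path between them avoiding `v`), then the induced
subgraph of the local complementation `τ_v(G)` on `V \ {v}` is connected; in particular,
`v` is not an articulation point of `τ_v(G)`. -/
theorem localComp_kills_articulation_point {V : Type*} [Fintype V] [DecidableEq V]
    (G : SimpleGraph V) (v : V) (hconn : G.Connected)
    (hart : ∃ x y : {w : V | w ≠ v}, ¬ (G.induce {w : V | w ≠ v}).Reachable x y) :
    ((localComp G v).induce {w : V | w ≠ v}).Connected :=
  localComp_kills_articulation_point_general G v hconn hart
end

section
/- Let G be a connected simple graph on 3 vertices {1,2,3}. Let |G⟩ ∈ ℂ^(Fin 3 → Fin 2) be its graph state and let |GHZ₃⟩ ∈ ℂ^(Fin 3 → Fin 2) be the three-qubit GHZ state, given by |GHZ₃⟩(x) = 1/√2 if x is a constant function and 0 otherwise. Then there exist 2×2 unitary matrices U₁, U₂, U₃ over ℂ and a complex number c with |c| = 1 such that (U₁ ⊗ U₂ ⊗ U₃)|G⟩ = c·|GHZ₃⟩. -/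
/-!
A connected graph on three vertices is either the star centred at some vertex `v` or the
triangle. The star state is `(|0⟩_v |++⟩ + |1⟩_v |−−⟩)/√2`, so Hadamard gates on the two
leaves turn it into `|GHZ₃⟩`. Local complementation at `0` turns the triangle into the star
at `0`; up to phase it is realised by `√(iX)` on qubit `0` and the phase gate
`S = diag(1, i)` on qubits `1, 2`. Hence `√(iX) ⊗ HS ⊗ HS` maps the triangle state to
`e^{iπ/4} |GHZ₃⟩`.
-/

open scoped BigOperators

/-- The graph state of a simple graph `G` on `N` qubits: the vector in
`ℂ^(Fin N → Fin 2)` with amplitudes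
`|G⟩(x) = 2^(−N/2) · (−1)^(number of edges {i,j} of G with x i = 1 and x j = 1)`. -/
noncomputable def graphState {N : ℕ} (G : SimpleGraph (Fin N)) [DecidableRel G.Adj] :
    (Fin N → Fin 2) → ℂ :=
  fun x => ((1 / Real.sqrt 2 : ℝ) : ℂ) ^ N *
    (-1 : ℂ) ^ (Finset.univ.filter
      (fun p : Fin N × Fin N =>
        p.1 < p.2 ∧ G.Adj p.1 p.2 ∧ x p.1 = 1 ∧ x p.2 = 1)).card

/-- The `N`-qubit GHZ state: amplitude `1/√2` on constant functions, `0` elsewhere. -/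
noncomputable def ghzState (N : ℕ) : (Fin N → Fin 2) → ℂ :=
  fun x => if ∀ i j : Fin N, x i = x j then ((1 / Real.sqrt 2 : ℝ) : ℂ) else 0

open Matrix SimpleGraph Complex

lemma Fintype.sum_fun_fin_succ {M α : Type*} [AddCommMonoid M] [Fintype α] {n : ℕ}
    (f : (Fin (n + 1) → α) → M) :
    ∑ y, f y = ∑ a, ∑ t : Fin n → α, f (Fin.cons a t) :=
  (Fintype.sum_equiv (Fin.consEquiv fun _ => α) _ _ fun _ => rfl).symm.trans
    (Fintype.sum_prod_type _)

lemma Fintype.sum_fun_fin_three {M α : Type*} [AddCommMonoid M] [Fintype α]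
    (f : (Fin 3 → α) → M) :
    ∑ y, f y = ∑ a, ∑ b, ∑ c, f ![a, b, c] := by
  simp only [Fintype.sum_fun_fin_succ, Fintype.sum_unique]
  rfl

lemma funext_fin_three {α β : Type*} {f g : (Fin 3 → α) → β}
    (h : ∀ a b c, f ![a, b, c] = g ![a, b, c]) : f = g := by
  ext x
  convert h (x 0) (x 1) (x 2) <;> ext i <;> fin_cases i <;> rfl

noncomputable def invSqrtTwo : ℂ := ((1 / Real.sqrt 2 : ℝ) : ℂ)

lemma invSqrtTwo_sq : invSqrtTwo ^ 2 = 2⁻¹ := by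
  rw [invSqrtTwo, ← ofReal_pow, div_pow, Real.sq_sqrt zero_le_two]
  norm_num

lemma star_invSqrtTwo : star invSqrtTwo = invSqrtTwo := conj_ofReal _

lemma norm_one_add_I_mul_invSqrtTwo : ‖(1 + I) * invSqrtTwo‖ = 1 := by
  have h : ‖1 + I‖ = √2 := by
    rw [norm_def, normSq_apply]
    norm_num
  rw [norm_mul, h, invSqrtTwo, norm_real, Real.norm_of_nonneg (by positivity)]
  field_simp

lemma invSqrtTwo_smul_mem_unitaryGroup {n : Type*} [Fintype n] [DecidableEq n]
    {A : Matrix n n ℂ} (hA : A * Aᴴ = (2 : ℂ) • 1) : invSqrtTwo • A ∈ unitaryGroup n ℂ := by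
  rw [mem_unitaryGroup_iff, star_eq_conjTranspose, conjTranspose_smul, star_invSqrtTwo,
    smul_mul_smul_comm, hA, smul_smul, ← sq, invSqrtTwo_sq]
  norm_num

noncomputable def hadamardGate : Matrix (Fin 2) (Fin 2) ℂ := invSqrtTwo • !![1, 1; 1, -1]

noncomputable def phaseGate : Matrix (Fin 2) (Fin 2) ℂ := !![1, 0; 0, I]

noncomputable def sqrtIX : Matrix (Fin 2) (Fin 2) ℂ := invSqrtTwo • !![1, I; I, 1]

lemma hadamardGate_mem_unitaryGroup : hadamardGate ∈ unitaryGroup (Fin 2) ℂ :=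
  invSqrtTwo_smul_mem_unitaryGroup <| by
    ext i j
    fin_cases i <;> fin_cases j <;> norm_num [mul_apply, Fin.sum_univ_two]

lemma phaseGate_mem_unitaryGroup : phaseGate ∈ unitaryGroup (Fin 2) ℂ := by
  rw [mem_unitaryGroup_iff]
  ext i j
  fin_cases i <;> fin_cases j <;> simp [phaseGate, mul_apply, Fin.sum_univ_two]

lemma sqrtIX_mem_unitaryGroup : sqrtIX ∈ unitaryGroup (Fin 2) ℂ :=
  invSqrtTwo_smul_mem_unitaryGroup <| by
    ext i j
    fin_cases i <;> fin_cases j <;> norm_num [mul_apply, Fin.sum_univ_two]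

noncomputable def starGate (v i : Fin 3) : Matrix (Fin 2) (Fin 2) ℂ :=
  if i = v then 1 else hadamardGate

lemma starGate_mem_unitaryGroup (v i : Fin 3) : starGate v i ∈ unitaryGroup (Fin 2) ℂ := by
  unfold starGate
  split_ifs
  exacts [one_mem _, hadamardGate_mem_unitaryGroup]

def tensorApply (U₁ U₂ U₃ : Matrix (Fin 2) (Fin 2) ℂ) (ψ : (Fin 3 → Fin 2) → ℂ)
    (x : Fin 3 → Fin 2) : ℂ :=
  ∑ y : Fin 3 → Fin 2, U₁ (x 0) (y 0) * U₂ (x 1) (y 1) * U₃ (x 2) (y 2) * ψ y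

lemma tensorApply_vecCons (U₁ U₂ U₃ : Matrix (Fin 2) (Fin 2) ℂ) (ψ : (Fin 3 → Fin 2) → ℂ)
    (a b c : Fin 2) :
    tensorApply U₁ U₂ U₃ ψ ![a, b, c] =
      ∑ a', ∑ b', ∑ c', U₁ a a' * U₂ b b' * U₃ c c' * ψ ![a', b', c'] := by
  rw [tensorApply, Fintype.sum_fun_fin_three]
  rfl

lemma graphState_fin_three (G : SimpleGraph (Fin 3)) [DecidableRel G.Adj] (a b c : Fin 2) :
    graphState G ![a, b, c] = invSqrtTwo ^ 3 *
      (-1) ^ ((if G.Adj 0 1 ∧ a = 1 ∧ b = 1 then 1 else 0)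
        + (if G.Adj 0 2 ∧ a = 1 ∧ c = 1 then 1 else 0)
        + (if G.Adj 1 2 ∧ b = 1 ∧ c = 1 then 1 else 0)) := by
  rw [graphState, invSqrtTwo, Finset.card_filter, Fintype.sum_prod_type]
  simp only [Fin.sum_univ_three]
  congr 2
  simp [Fin.lt_def]

lemma ghzState_fin_three (a b c : Fin 2) :
    ghzState 3 ![a, b, c] = if a = b ∧ b = c then invSqrtTwo else 0 := by
  rw [ghzState, ← invSqrtTwo]
  refine if_congr ⟨fun h => ⟨h 0 1, h 1 2⟩, fun ⟨hab, hbc⟩ i j => ?_⟩ rfl rfl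
  fin_cases i <;> fin_cases j <;> simp [hab, hbc]

lemma SimpleGraph.ext_fin_three {G H : SimpleGraph (Fin 3)} (h01 : G.Adj 0 1 ↔ H.Adj 0 1)
    (h02 : G.Adj 0 2 ↔ H.Adj 0 2) (h12 : G.Adj 1 2 ↔ H.Adj 1 2) : G = H := by
  ext i j
  fin_cases i <;> fin_cases j <;>
    simp [h01, h02, h12, G.adj_comm _ 0, H.adj_comm _ 0, G.adj_comm 2 1, H.adj_comm 2 1]

lemma eq_top_or_eq_starGraph_of_connected {G : SimpleGraph (Fin 3)} (hG : G.Connected) :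
    G = ⊤ ∨ ∃ v, G = starGraph v := by
  have hnbr : ∀ v, ∃ w, G.Adj v w := hG.preconnected.exists_adj_of_nontrivial
  by_cases h01 : G.Adj 0 1 <;> by_cases h02 : G.Adj 0 2 <;> by_cases h12 : G.Adj 1 2
  · exact .inl (ext_fin_three (by simpa) (by simpa) (by simpa))
  · exact .inr ⟨0, ext_fin_three (by simpa) (by simpa) (by simpa)⟩
  · exact .inr ⟨1, ext_fin_three (by simpa) (by simpa) (by simpa)⟩
  · exact absurd (hnbr 2) (by simp [Fin.exists_fin_succ, G.adj_comm 2, h02, h12])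
  · exact .inr ⟨2, ext_fin_three (by simpa) (by simpa) (by simpa)⟩
  · exact absurd (hnbr 1) (by simp [Fin.exists_fin_succ, G.adj_comm 1 0, h01, h12])
  · exact absurd (hnbr 0) (by simp [Fin.exists_fin_succ, h01, h02])
  · exact absurd (hnbr 0) (by simp [Fin.exists_fin_succ, h01, h02])

lemma tensorApply_starGate_graphState_starGraph (v : Fin 3) [DecidableRel (starGraph v).Adj] :
    tensorApply (starGate v 0) (starGate v 1) (starGate v 2) (graphState (starGraph v)) =
      ghzState 3 := by
  refine funext_fin_three ?_
  simp only [Fin.forall_fin_two, tensorApply_vecCons, graphState_fin_three, ghzState_fin_three,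
    starGraph_adj, Fin.sum_univ_two]
  fin_cases v <;> simp [starGate, hadamardGate] <;> grind [invSqrtTwo_sq]

lemma tensorApply_sqrtIX_graphState_top [DecidableRel (⊤ : SimpleGraph (Fin 3)).Adj] :
    tensorApply sqrtIX (hadamardGate * phaseGate) (hadamardGate * phaseGate) (graphState ⊤) =
      ((1 + I) * invSqrtTwo) • ghzState 3 := by
  refine funext_fin_three ?_
  simp only [Fin.forall_fin_two, tensorApply_vecCons, graphState_fin_three, ghzState_fin_three,
    top_adj, Fin.sum_univ_two, Pi.smul_apply, smul_eq_mul]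
  simp [sqrtIX, hadamardGate, phaseGate]
  grind [invSqrtTwo_sq, I_sq]

/-- every connected graph state on 3 qubits is local-unitarily equivalent
(up to a global phase) to the three-qubit GHZ state. -/
theorem connected_three_vertex_graphState_LU_GHZ
    (G : SimpleGraph (Fin 3)) [DecidableRel G.Adj] (hconn : G.Connected) :
    ∃ (U₁ U₂ U₃ : Matrix (Fin 2) (Fin 2) ℂ) (c : ℂ),
      U₁ ∈ Matrix.unitaryGroup (Fin 2) ℂ ∧
      U₂ ∈ Matrix.unitaryGroup (Fin 2) ℂ ∧
      U₃ ∈ Matrix.unitaryGroup (Fin 2) ℂ ∧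
      ‖c‖ = 1 ∧
      ∀ x : Fin 3 → Fin 2,
        (∑ y : Fin 3 → Fin 2,
            U₁ (x 0) (y 0) * U₂ (x 1) (y 1) * U₃ (x 2) (y 2) * graphState G y)
          = c * ghzState 3 x := by
  obtain rfl | ⟨v, rfl⟩ := eq_top_or_eq_starGraph_of_connected hconn
  · have hHS := mul_mem hadamardGate_mem_unitaryGroup phaseGate_mem_unitaryGroup
    exact ⟨_, _, _, _, sqrtIX_mem_unitaryGroup, hHS, hHS, norm_one_add_I_mul_invSqrtTwo,
      congrFun tensorApply_sqrtIX_graphState_top⟩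
  · refine ⟨_, _, _, 1, starGate_mem_unitaryGroup v 0, starGate_mem_unitaryGroup v 1,
      starGate_mem_unitaryGroup v 2, norm_one, fun x => ?_⟩
    rw [one_mul]
    exact congrFun (tensorApply_starGate_graphState_starGraph v) x
end

section
/- Let d ≥ 2 and 3 ≤ n < N be natural numbers. Let |GHZ_{N,d}⟩ ∈ ℂ^(Fin N → Fin d) be given by |GHZ_{N,d}⟩(x) = 1/√d if x is constant and 0 otherwise, and similarly |GHZ_{n,d}⟩ ∈ ℂ^(Fin n → Fin d). Then there exists a unitary matrix U on ℂ^(Fin (N−n+1) → Fin d) such that applying the identity on the first n−1 tensor factors and U on the last N−n+1 tensor factors maps |GHZ_{N,d}⟩ to |GHZ_{n,d}⟩ ⊗ |0⟩^{⊗(N−n)}, where |0⟩^{⊗(N−n)} is the standard basis vector of ℂ^(Fin (N−n) → Fin d) corresponding to the constant-zero function. -/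
open scoped BigOperators

/-- The `N`-partite `d`-level GHZ state: amplitude `1/√d` on constant functions,
`0` elsewhere. -/
noncomputable def ghzVec (N d : ℕ) : (Fin N → Fin d) → ℂ :=
  fun x => if ∀ i j : Fin N, x i = x j then ((1 / Real.sqrt d : ℝ) : ℂ) else 0

/-- The restriction of `x : Fin N → Fin d` to its first `m` coordinates. -/
def splitLow {N d : ℕ} (m : ℕ) (h : m ≤ N) (x : Fin N → Fin d) : Fin m → Fin d :=
  fun i => x (Fin.castLE h i)

/-- The restriction of `x : Fin N → Fin d` to its last `N - m` coordinates. -/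
def splitHigh {N d : ℕ} (m : ℕ) (h : m ≤ N) (x : Fin N → Fin d) :
    Fin (N - m) → Fin d :=
  fun j => x ⟨m + j, by have := j.isLt; omega⟩

/-- Glue a function on the first `m` coordinates and a function on the last `N - m`
coordinates into a function on all `N` coordinates. -/
def combine {N d : ℕ} (m : ℕ) (h : m ≤ N) (a : Fin m → Fin d)
    (b : Fin (N - m) → Fin d) : Fin N → Fin d :=
  fun i =>
    if hi : (i : ℕ) < m then a ⟨i, hi⟩
    else b ⟨(i : ℕ) - m, by have := i.isLt; omega⟩

/-- The vector `(c, 0, 0, ..., 0)`. -/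
def eVec {d m : ℕ} (hd : 0 < d) (c : Fin d) : Fin m → Fin d :=
  fun k => if (k : ℕ) = 0 then c else ⟨0, hd⟩

open Classical in
/-- The involution exchanging constant vectors `(c,...,c)` with `(c,0,...,0)`. -/
noncomputable def fMap {d m : ℕ} (hd : 0 < d) (hm : 0 < m) (y : Fin m → Fin d) :
    Fin m → Fin d :=
  if ∀ k, y k = y ⟨0, hm⟩ then eVec hd (y ⟨0, hm⟩)
  else if ∀ k : Fin m, (k : ℕ) ≠ 0 → y k = ⟨0, hd⟩ then fun _ => y ⟨0, hm⟩
  else y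

lemma fMap_invol {d m : ℕ} (hd : 0 < d) (hm : 0 < m) (hm2 : 2 ≤ m) :
    Function.Involutive (fMap hd hm) := by
  classical
  intro y
  by_cases h1 : ∀ k, y k = y ⟨0, hm⟩
  · have e1 : fMap hd hm y = eVec hd (y ⟨0, hm⟩) := by rw [fMap, if_pos h1]
    rw [e1]
    by_cases hc : y ⟨0, hm⟩ = ⟨0, hd⟩
    · have he : eVec (m := m) hd (y ⟨0, hm⟩) = y := by
        funext k
        rw [h1 k]
        unfold eVec
        split <;> [rfl; exact hc.symm]
      rw [he, e1]
      exact he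
    · have h1' : ¬ ∀ k, eVec (m := m) hd (y ⟨0, hm⟩) k
          = eVec (m := m) hd (y ⟨0, hm⟩) ⟨0, hm⟩ := by
        intro h
        have h2 := h ⟨1, by omega⟩
        have hval1 : eVec (m := m) hd (y ⟨0, hm⟩) ⟨1, by omega⟩ = ⟨0, hd⟩ := by
          unfold eVec
          exact if_neg (by simp)
        have hval0 : eVec (m := m) hd (y ⟨0, hm⟩) ⟨0, hm⟩ = y ⟨0, hm⟩ := by
          unfold eVec
          exact if_pos rfl
        rw [hval1, hval0] at h2
        exact hc h2.symm
      have h2' : ∀ k : Fin m, (k : ℕ) ≠ 0 →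
          eVec (m := m) hd (y ⟨0, hm⟩) k = ⟨0, hd⟩ := by
        intro k hk
        unfold eVec
        rw [if_neg hk]
      rw [fMap, if_neg h1', if_pos h2']
      funext k
      show eVec (m := m) hd (y ⟨0, hm⟩) ⟨0, hm⟩ = y k
      unfold eVec
      rw [if_pos rfl]
      exact (h1 k).symm
  · by_cases h2 : ∀ k : Fin m, (k : ℕ) ≠ 0 → y k = ⟨0, hd⟩
    · have e1 : fMap hd hm y = fun _ => y ⟨0, hm⟩ := by
        rw [fMap, if_neg h1, if_pos h2]
      rw [e1, fMap, if_pos (fun k => rfl)]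
      funext k
      unfold eVec
      by_cases hk : (k : ℕ) = 0
      · rw [if_pos hk]
        have : k = ⟨0, hm⟩ := Fin.ext hk
        rw [this]
      · rw [if_neg hk]
        exact (h2 k hk).symm
    · have e1 : fMap hd hm y = y := by rw [fMap, if_neg h1, if_neg h2]
      rw [e1, e1]

set_option maxHeartbeats 1000000 in
/-- The key pointwise identity. -/
lemma ghz_key (d n N : ℕ) (hd0 : 0 < d) (hn : 3 ≤ n) (hnN : n < N)
    (hle : n - 1 ≤ N) (hle' : n ≤ N) (hm0 : 0 < N - (n - 1)) (x : Fin N → Fin d) :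
    ghzVec N d (combine (n - 1) hle (splitLow (n - 1) hle x)
        (fMap hd0 hm0 (splitHigh (n - 1) hle x)))
      = ghzVec n d (splitLow n hle' x) *
          (if ∀ j : Fin N, n ≤ (j : ℕ) → x j = ⟨0, hd0⟩ then 1 else 0) := by
  classical
  have hN0 : 0 < N := by omega
  have hn0 : 0 < n := by omega
  have hm2 : 2 ≤ N - (n - 1) := by omega
  set s : Fin (N - (n - 1)) → Fin d := splitHigh (n - 1) hle x with hs
  set z : Fin (N - (n - 1)) → Fin d := fMap hd0 hm0 s with hz
  set w : Fin N → Fin d := combine (n - 1) hle (splitLow (n - 1) hle x) z with hw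
  set c0 : Fin d := x ⟨0, hN0⟩ with hc0
  set zd : Fin d := (⟨0, hd0⟩ : Fin d) with hzd
  have hsval : ∀ k : Fin (N - (n - 1)), s k = x ⟨n - 1 + (k : ℕ), by omega⟩ :=
    fun k => rfl
  have hs0 : s ⟨0, hm0⟩ = x ⟨n - 1, by omega⟩ := rfl
  have hwlow : ∀ i : Fin N, (i : ℕ) < n - 1 → w i = x i := by
    intro i hi
    show combine (n - 1) hle (splitLow (n - 1) hle x) z i = x i
    unfold combine
    rw [dif_pos hi]
    show x (Fin.castLE hle ⟨(i : ℕ), hi⟩) = x i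
    rfl
  have hwhigh : ∀ k : Fin (N - (n - 1)),
      w ⟨n - 1 + (k : ℕ), by omega⟩ = z k := by
    intro k
    show combine (n - 1) hle (splitLow (n - 1) hle x) z ⟨n - 1 + (k : ℕ), _⟩ = z k
    unfold combine
    rw [dif_neg (by simp only [Fin.val_mk]; omega)]
    congr 1
    exact Fin.ext (by simp only [Fin.val_mk]; omega)
  have const_iff : ∀ {k : ℕ} (hk : 0 < k) (v : Fin k → Fin d),
      (∀ i j, v i = v j) ↔ ∀ i, v i = v ⟨0, hk⟩ := by
    intro k hk v
    constructor
    · intro h i; exact h i _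
    · intro h i j; rw [h i, h j]
  -- the four component propositions
  have h1 : (∀ i j : Fin N, w i = w j) ↔
      ((∀ i : Fin N, (i : ℕ) < n - 1 → x i = c0) ∧
        (∀ k : Fin (N - (n - 1)), z k = c0)) := by
    rw [const_iff hN0 w]
    have hw0 : w ⟨0, hN0⟩ = c0 := hwlow ⟨0, hN0⟩ (by simp only [Fin.val_mk]; omega)
    constructor
    · intro h
      constructor
      · intro i hi
        rw [← hwlow i hi, h i, hw0]
      · intro k
        rw [← hwhigh k, h ⟨n - 1 + (k : ℕ), by omega⟩, hw0]
    · rintro ⟨hP, hQ⟩ i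
      rw [hw0]
      by_cases hi : (i : ℕ) < n - 1
      · rw [hwlow i hi]; exact hP i hi
      · have hiv : i = ⟨n - 1 + ((i : ℕ) - (n - 1)), by omega⟩ :=
          Fin.ext (by simp only [Fin.val_mk]; omega)
        have := hwhigh ⟨(i : ℕ) - (n - 1), by omega⟩
        rw [hiv]
        rw [this]
        exact hQ _
  have h2 : (∀ i j : Fin n, splitLow n hle' x i = splitLow n hle' x j) ↔
      ((∀ i : Fin N, (i : ℕ) < n - 1 → x i = c0) ∧ s ⟨0, hm0⟩ = c0) := by
    have hval : ∀ i : Fin n, splitLow n hle' x i = x ⟨(i : ℕ), by omega⟩ := by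
      intro i
      show x (Fin.castLE hle' i) = _
      rfl
    rw [const_iff hn0]
    constructor
    · intro h
      have hc : ∀ i : Fin n, x ⟨(i : ℕ), by omega⟩ = c0 := by
        intro i
        have := h i
        rw [hval i, hval ⟨0, hn0⟩] at this
        exact this
      constructor
      · intro i hi
        have := hc ⟨(i : ℕ), by omega⟩
        have hix : (⟨(i : ℕ), by omega⟩ : Fin N) = i := Fin.ext rfl
        rwa [hix] at this
      · rw [hs0]
        exact hc ⟨n - 1, by omega⟩
    · rintro ⟨hP, h0⟩ i
      rw [hval i, hval ⟨0, hn0⟩]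
      have key : ∀ i : Fin n, x ⟨(i : ℕ), by omega⟩ = c0 := by
        intro i
        by_cases hi : (i : ℕ) < n - 1
        · exact hP ⟨(i : ℕ), by omega⟩ hi
        · have hiv : ((i : ℕ) : ℕ) = n - 1 := by omega
          rw [hs0] at h0
          have hix : (⟨(i : ℕ), by omega⟩ : Fin N) = ⟨n - 1, by omega⟩ :=
            Fin.ext hiv
          rw [hix]
          exact h0
      rw [key i, key ⟨0, hn0⟩]
  have h3 : (∀ j : Fin N, n ≤ (j : ℕ) → x j = zd) ↔
      (∀ k : Fin (N - (n - 1)), (k : ℕ) ≠ 0 → s k = zd) := by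
    constructor
    · intro h k hk
      rw [hsval k]
      exact h _ (by simp only [Fin.val_mk]; omega)
    · intro h j hj
      have hjv : j = ⟨n - 1 + ((j : ℕ) - (n - 1)), by omega⟩ :=
        Fin.ext (by simp only [Fin.val_mk]; omega)
      rw [hjv, ← hsval ⟨(j : ℕ) - (n - 1), by omega⟩]
      exact h _ (by simp only [Fin.val_mk]; omega)
  have h4 : (∀ k : Fin (N - (n - 1)), z k = c0) ↔
      (s ⟨0, hm0⟩ = c0 ∧ ∀ k : Fin (N - (n - 1)), (k : ℕ) ≠ 0 → s k = zd) := by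
    by_cases hc1 : ∀ k, s k = s ⟨0, hm0⟩
    · have hzeq : z = eVec hd0 (s ⟨0, hm0⟩) := by
        rw [hz, fMap, if_pos hc1]
      rw [hzeq]
      constructor
      · intro hQ
        have h0 : s ⟨0, hm0⟩ = c0 := by
          have := hQ ⟨0, hm0⟩
          unfold eVec at this
          rwa [if_pos rfl] at this
        have hzd : zd = c0 := by
          have := hQ ⟨1, by omega⟩
          unfold eVec at this
          rwa [if_neg (show ((⟨1, by omega⟩ : Fin (N - (n - 1))) : ℕ) ≠ 0
            from one_ne_zero)] at this
        refine ⟨h0, fun k hk => ?_⟩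
        rw [hc1 k, h0, ← hzd]
      · rintro ⟨h0, hb⟩ k
        unfold eVec
        by_cases hk : (k : ℕ) = 0
        · rw [if_pos hk]; exact h0
        · rw [if_neg hk]
          have hszd : s ⟨0, hm0⟩ = zd := (hc1 k).symm.trans (hb k hk)
          exact hszd.symm.trans h0
    · by_cases hc2 : ∀ k : Fin (N - (n - 1)), (k : ℕ) ≠ 0 → s k = zd
      · have hzeq : z = fun _ => s ⟨0, hm0⟩ := by
          rw [hz, fMap, if_neg hc1, if_pos hc2]
        rw [hzeq]
        constructor
        · intro hQ
          exact ⟨hQ ⟨0, hm0⟩, hc2⟩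
        · rintro ⟨h0, _⟩ k
          exact h0
      · have hzeq : z = s := by
          rw [hz, fMap, if_neg hc1, if_neg hc2]
        rw [hzeq]
        constructor
        · intro hQ
          exact absurd (fun k => (hQ k).trans (hQ ⟨0, hm0⟩).symm) hc1
        · rintro ⟨h0, hb⟩
          exact absurd hb hc2
  have hiff : (∀ i j : Fin N, w i = w j) ↔
      ((∀ i j : Fin n, splitLow n hle' x i = splitLow n hle' x j) ∧
        (∀ j : Fin N, n ≤ (j : ℕ) → x j = zd)) := by
    rw [h1, h2, h3, h4]
    tauto
  show ghzVec N d w = _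
  unfold ghzVec
  rw [if_congr hiff rfl rfl]
  by_cases hA : ∀ i j : Fin n, splitLow n hle' x i = splitLow n hle' x j <;>
    by_cases hB : ∀ j : Fin N, n ≤ (j : ℕ) → x j = zd
  · rw [if_pos ⟨hA, hB⟩, if_pos hA, if_pos hB, mul_one]
  · rw [if_neg (fun h => hB h.2), if_neg hB, mul_zero]
  · rw [if_neg (fun h => hA h.1), if_neg hA, zero_mul]
  · rw [if_neg (fun h => hA h.1), if_neg hA, zero_mul]

set_option maxHeartbeats 1000000 in
/-- for `d ≥ 2` and `3 ≤ n < N` there is a unitary `U` on the last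
`N − n + 1` tensor factors (of local dimension `d`) such that `𝟙^(⊗(n−1)) ⊗ U` maps
`|GHZ_{N,d}⟩` to `|GHZ_{n,d}⟩ ⊗ |0⟩^(⊗(N−n))`. -/
theorem ghz_reduction_unitary (d n N : ℕ) (hd : 2 ≤ d) (hn : 3 ≤ n) (hnN : n < N) :
    ∃ U : Matrix (Fin (N - (n - 1)) → Fin d) (Fin (N - (n - 1)) → Fin d) ℂ,
      U ∈ Matrix.unitaryGroup (Fin (N - (n - 1)) → Fin d) ℂ ∧
      ∀ x : Fin N → Fin d,
        (∑ y : Fin (N - (n - 1)) → Fin d,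
            U (splitHigh (n - 1) (by omega) x) y *
              ghzVec N d (combine (n - 1) (by omega) (splitLow (n - 1) (by omega) x) y))
          = ghzVec n d (splitLow n (by omega) x) *
              (if ∀ j : Fin N, n ≤ (j : ℕ) → x j = ⟨0, by omega⟩ then 1 else 0) := by
  classical
  have hd0 : 0 < d := by omega
  have hm0 : 0 < N - (n - 1) := by omega
  have hm2 : 2 ≤ N - (n - 1) := by omega
  have hle : n - 1 ≤ N := by omega
  have hle' : n ≤ N := by omega
  have hinv := fMap_invol hd0 hm0 hm2
  set f : (Fin (N - (n - 1)) → Fin d) → (Fin (N - (n - 1)) → Fin d) :=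
    fMap hd0 hm0 with hfdef
  have key : ∀ a y : Fin (N - (n - 1)) → Fin d, (a = f y) ↔ (y = f a) := by
    intro a y
    constructor
    · rintro rfl; exact (hinv y).symm
    · rintro rfl; exact (hinv a).symm
  have hrw : ∀ (a : Fin (N - (n - 1)) → Fin d) (g : (Fin (N - (n - 1)) → Fin d) → ℂ),
      (∑ y, if a = f y then g y else 0) = g (f a) := by
    intro a g
    exact (Finset.sum_congr rfl fun y _ => if_congr (key a y) rfl rfl).trans
      (Fintype.sum_ite_eq' (f a) g)
  refine ⟨Matrix.of fun s y => if s = f y then (1 : ℂ) else 0, ?_, ?_⟩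
  · rw [Matrix.mem_unitaryGroup_iff]
    ext a b
    simp only [Matrix.mul_apply, Matrix.star_apply, Matrix.of_apply, Matrix.one_apply]
    simp only [apply_ite (star : ℂ → ℂ), star_one, star_zero, ite_mul, one_mul, zero_mul]
    rw [hrw a (fun y => if b = f y then (1 : ℂ) else 0), hinv a]
    by_cases hab : a = b
    · rw [if_pos hab.symm, if_pos hab]
    · rw [if_neg (fun h => hab h.symm), if_neg hab]
  · intro x
    simp only [Matrix.of_apply, ite_mul, one_mul, zero_mul]
    rw [hrw (splitHigh (n - 1) (by omega) x)
      (fun y => ghzVec N d (combine (n - 1) (by omega) (splitLow (n - 1) (by omega) x) y))]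
    exact ghz_key d n N hd0 hn hnN hle hle' hm0 x
end

section
/- Let d ≥ 1 and let p : Fin d × Fin d × Fin d → ℝ be a probability distribution (p ≥ 0 pointwise and Σ_{i,j,k} p(i,j,k) = 1) with marginals p_A(i) = Σ_{j,k} p(i,j,k), p_B(j) = Σ_{i,k} p(i,j,k), p_C(k) = Σ_{i,j} p(i,j,k). Suppose the Finner inequality holds: p(i,j,k) ≤ √(p_A(i) · p_B(j) · p_C(k)) for all i, j, k. Then Σ_{i=0}^{d−1} √(p(i,i,i)) ≤ d^{1/4}; equivalently, (1/d)·(Σ_i √(p(i,i,i)))² ≤ 1/√d. -/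
open scoped BigOperators

private lemma cs_sqrt {d : ℕ} (f g : Fin d → ℝ) (hf : ∀ i, 0 ≤ f i) (hg : ∀ i, 0 ≤ g i) :
    ∑ i : Fin d, f i * g i ≤
      Real.sqrt (∑ i : Fin d, f i ^ 2) * Real.sqrt (∑ i : Fin d, g i ^ 2) := by
  calc ∑ i : Fin d, f i * g i
      ≤ Real.sqrt ((∑ i : Fin d, f i ^ 2) * (∑ i : Fin d, g i ^ 2)) := by
        rw [Real.le_sqrt (Finset.sum_nonneg fun i _ => mul_nonneg (hf i) (hg i))]
        · exact Finset.sum_mul_sq_le_sq_mul_sq _ _ _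
        · positivity
    _ = _ := Real.sqrt_mul (Finset.sum_nonneg fun i _ => sq_nonneg _) _

/-- if a tripartite probability distribution `p` on `Fin d × Fin d × Fin d`
satisfies the Finner inequality `p(i,j,k) ≤ √(p_A(i)·p_B(j)·p_C(k))` with respect to its
marginals, then `Σ_i √(p(i,i,i)) ≤ d^(1/4)`; equivalently,
`(1/d)·(Σ_i √(p(i,i,i)))² ≤ 1/√d`. -/
theorem finner_diag_sqrt_sum_bound (d : ℕ) (hd : 1 ≤ d)
    (p : Fin d × Fin d × Fin d → ℝ)
    (hp : ∀ x, 0 ≤ p x) (hsum : ∑ x : Fin d × Fin d × Fin d, p x = 1)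
    (hfinner : ∀ i j k : Fin d,
      p (i, j, k) ≤
        Real.sqrt ((∑ j' : Fin d, ∑ k' : Fin d, p (i, j', k')) *
          (∑ i' : Fin d, ∑ k' : Fin d, p (i', j, k')) *
          (∑ i' : Fin d, ∑ j' : Fin d, p (i', j', k)))) :
    (∑ i : Fin d, Real.sqrt (p (i, i, i))) ≤ (d : ℝ) ^ ((1 : ℝ) / 4) ∧
    (1 / (d : ℝ)) * (∑ i : Fin d, Real.sqrt (p (i, i, i))) ^ 2 ≤ 1 / Real.sqrt d := by
  set A : Fin d → ℝ := fun i => ∑ j' : Fin d, ∑ k' : Fin d, p (i, j', k') with hAdef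
  set B : Fin d → ℝ := fun j => ∑ i' : Fin d, ∑ k' : Fin d, p (i', j, k') with hBdef
  set C : Fin d → ℝ := fun k => ∑ i' : Fin d, ∑ j' : Fin d, p (i', j', k) with hCdef
  have hA : ∀ i, 0 ≤ A i := fun i =>
    Finset.sum_nonneg fun _ _ => Finset.sum_nonneg fun _ _ => hp _
  have hB : ∀ i, 0 ≤ B i := fun i =>
    Finset.sum_nonneg fun _ _ => Finset.sum_nonneg fun _ _ => hp _
  have hC : ∀ i, 0 ≤ C i := fun i =>
    Finset.sum_nonneg fun _ _ => Finset.sum_nonneg fun _ _ => hp _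
  have hsumA : ∑ i : Fin d, A i = 1 := by
    rw [← hsum, Fintype.sum_prod_type]
    simp [hAdef, Fintype.sum_prod_type]
  have hsumB : ∑ i : Fin d, B i = 1 := by
    rw [← hsum, Fintype.sum_prod_type]
    simp [hBdef, Fintype.sum_prod_type]
    rw [Finset.sum_comm]
  have hsumC : ∑ i : Fin d, C i = 1 := by
    rw [← hsum, Fintype.sum_prod_type]
    simp only [hCdef, Fintype.sum_prod_type]
    rw [Finset.sum_comm]
    apply Finset.sum_congr rfl
    intro i _
    rw [Finset.sum_comm]
  -- pointwise bound
  have hpt : ∀ i : Fin d, Real.sqrt (p (i, i, i)) ≤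
      Real.sqrt (Real.sqrt (A i * B i)) * Real.sqrt (Real.sqrt (C i)) := by
    intro i
    have h1 : Real.sqrt (p (i, i, i)) ≤ Real.sqrt (Real.sqrt (A i * B i * C i)) :=
      Real.sqrt_le_sqrt (hfinner i i i)
    refine h1.trans_eq ?_
    rw [Real.sqrt_mul (mul_nonneg (hA i) (hB i)),
      Real.sqrt_mul (Real.sqrt_nonneg _)]
  -- main Cauchy–Schwarz
  have hAB : ∑ i : Fin d, Real.sqrt (A i * B i) ≤ 1 := by
    have h := cs_sqrt (fun i => Real.sqrt (A i)) (fun i => Real.sqrt (B i))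
      (fun i => Real.sqrt_nonneg _) (fun i => Real.sqrt_nonneg _)
    simp only [Real.sq_sqrt (hA _), Real.sq_sqrt (hB _)] at h
    calc ∑ i : Fin d, Real.sqrt (A i * B i)
        = ∑ i : Fin d, Real.sqrt (A i) * Real.sqrt (B i) := by
          exact Finset.sum_congr rfl fun i _ => Real.sqrt_mul (hA i) _
      _ ≤ Real.sqrt (∑ i : Fin d, A i) * Real.sqrt (∑ i : Fin d, B i) := h
      _ = 1 := by rw [hsumA, hsumB, Real.sqrt_one, mul_one]
  have hCsum : ∑ i : Fin d, Real.sqrt (C i) ≤ Real.sqrt d := by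
    have h := cs_sqrt (fun _ : Fin d => (1 : ℝ)) (fun i => Real.sqrt (C i))
      (fun i => zero_le_one) (fun i => Real.sqrt_nonneg _)
    simp only [one_mul, one_pow, Real.sq_sqrt (hC _), Finset.sum_const,
      Finset.card_univ, Fintype.card_fin, nsmul_eq_mul, mul_one, hsumC,
      Real.sqrt_one] at h
    exact h
  have hmain : (∑ i : Fin d, Real.sqrt (p (i, i, i))) ≤ Real.sqrt (Real.sqrt d) := by
    calc (∑ i : Fin d, Real.sqrt (p (i, i, i)))
        ≤ ∑ i : Fin d, Real.sqrt (Real.sqrt (A i * B i)) * Real.sqrt (Real.sqrt (C i)) :=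
          Finset.sum_le_sum fun i _ => hpt i
      _ ≤ Real.sqrt (∑ i : Fin d, Real.sqrt (A i * B i)) *
            Real.sqrt (∑ i : Fin d, Real.sqrt (C i)) := by
          have h := cs_sqrt (fun i => Real.sqrt (Real.sqrt (A i * B i)))
            (fun i => Real.sqrt (Real.sqrt (C i)))
            (fun i => Real.sqrt_nonneg _) (fun i => Real.sqrt_nonneg _)
          simpa only [Real.sq_sqrt (Real.sqrt_nonneg _)] using h
      _ ≤ Real.sqrt 1 * Real.sqrt (Real.sqrt d) :=
          mul_le_mul (Real.sqrt_le_sqrt hAB) (Real.sqrt_le_sqrt hCsum)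
            (Real.sqrt_nonneg _) (by positivity)
      _ = Real.sqrt (Real.sqrt d) := by rw [Real.sqrt_one, one_mul]
  have hd0 : (0 : ℝ) < d := by exact_mod_cast hd
  have hrpow : Real.sqrt (Real.sqrt d) = (d : ℝ) ^ ((1 : ℝ) / 4) := by
    rw [Real.sqrt_eq_rpow, Real.sqrt_eq_rpow, ← Real.rpow_mul (le_of_lt hd0)]
    norm_num
  constructor
  · rw [← hrpow]; exact hmain
  · have hS0 : 0 ≤ ∑ i : Fin d, Real.sqrt (p (i, i, i)) :=
      Finset.sum_nonneg fun i _ => Real.sqrt_nonneg _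
    have hsq : (∑ i : Fin d, Real.sqrt (p (i, i, i))) ^ 2 ≤ Real.sqrt d := by
      have := pow_le_pow_left₀ hS0 hmain 2
      rwa [Real.sq_sqrt (Real.sqrt_nonneg _)] at this
    have hsd : 0 < Real.sqrt d := Real.sqrt_pos.mpr hd0
    calc (1 / (d : ℝ)) * (∑ i : Fin d, Real.sqrt (p (i, i, i))) ^ 2
        ≤ (1 / (d : ℝ)) * Real.sqrt d := by
          apply mul_le_mul_of_nonneg_left hsq (by positivity)
      _ = 1 / Real.sqrt d := by
          rw [eq_div_iff hsd.ne', one_div, mul_assoc,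
            Real.mul_self_sqrt hd0.le, inv_mul_cancel₀ hd0.ne']
end

section
/- Let d ≥ 1 and N ≥ 4, and let p : (Fin N → Fin d) → ℝ be a probability distribution (p ≥ 0 pointwise and Σ_a p(a) = 1) with marginals p_k(i) = Σ_{a : a(k) = i} p(a) for each k ∈ Fin N and i ∈ Fin d. Suppose the Finner inequality holds: p(a) ≤ √( Π_{k=0}^{N−1} p_k(a(k)) ) for every a : Fin N → Fin d. Then Σ_{i=0}^{d−1} √(p(c_i)) ≤ 1, where c_i denotes the constant function with value i; equivalently, (1/d)·(Σ_i √(p(c_i)))² ≤ 1/d. -/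
open scoped BigOperators

private lemma sqrt_mul_le_half (x y : ℝ) (hx : 0 ≤ x) (hy : 0 ≤ y) :
    Real.sqrt (x * y) ≤ (x + y) / 2 := by
  have h1 := Real.sq_sqrt hx
  have h2 := Real.sq_sqrt hy
  have h3 := Real.sqrt_nonneg x
  have h4 := Real.sqrt_nonneg y
  rw [Real.sqrt_mul hx]
  nlinarith [sq_nonneg (Real.sqrt x - Real.sqrt y)]

/-- if an `N`-partite probability distribution `p` on `Fin N → Fin d` with
`N ≥ 4` satisfies the Finner inequality `p(a) ≤ √(Π_k p_k(a(k)))` with respect to its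
marginals, then `Σ_i √(p(c_i)) ≤ 1` for the constant outcomes `c_i`; equivalently,
`(1/d)·(Σ_i √(p(c_i)))² ≤ 1/d`. -/
theorem finner_diag_sqrt_sum_bound_N_ge_four (d N : ℕ) (hd : 1 ≤ d) (hN : 4 ≤ N)
    (p : (Fin N → Fin d) → ℝ)
    (hp : ∀ a, 0 ≤ p a) (hsum : ∑ a : Fin N → Fin d, p a = 1)
    (hfinner : ∀ a : Fin N → Fin d,
      p a ≤ Real.sqrt (∏ k : Fin N,
        ∑ b : Fin N → Fin d, if b k = a k then p b else 0)) :
    (∑ i : Fin d, Real.sqrt (p (fun _ => i))) ≤ 1 ∧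
    (1 / (d : ℝ)) * (∑ i : Fin d, Real.sqrt (p (fun _ => i))) ^ 2 ≤ 1 / (d : ℝ) := by
  set m : Fin N → Fin d → ℝ := fun k i => ∑ b : Fin N → Fin d, if b k = i then p b else 0
    with hm
  have hm_nonneg : ∀ k i, 0 ≤ m k i := by
    intro k i
    apply Finset.sum_nonneg
    intro b _
    split
    · exact hp b
    · exact le_rfl
  have hm_sum : ∀ k, ∑ i : Fin d, m k i = 1 := by
    intro k
    rw [hm]
    rw [Finset.sum_comm]
    simpa using hsum
  have hm_le_one : ∀ k i, m k i ≤ 1 := by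
    intro k i
    calc m k i ≤ ∑ j : Fin d, m k j :=
          Finset.single_le_sum (fun j _ => hm_nonneg k j) (Finset.mem_univ i)
      _ = 1 := hm_sum k
  -- indices
  have h0 : (0:ℕ) < N := by omega
  have h1 : (1:ℕ) < N := by omega
  have h2 : (2:ℕ) < N := by omega
  have h3 : (3:ℕ) < N := by omega
  set k0 : Fin N := ⟨0, h0⟩
  set k1 : Fin N := ⟨1, h1⟩
  set k2 : Fin N := ⟨2, h2⟩
  set k3 : Fin N := ⟨3, h3⟩
  have key : ∀ i : Fin d, Real.sqrt (p (fun _ => i)) ≤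
      (m k0 i + m k1 i + m k2 i + m k3 i) / 4 := by
    intro i
    have hS : ({k0, k1, k2, k3} : Finset (Fin N)) ⊆ Finset.univ := Finset.subset_univ _
    have hprod_le : (∏ k : Fin N, m k i) ≤ m k0 i * m k1 i * m k2 i * m k3 i := by
      have hsplit := Finset.prod_mul_prod_compl ({k0, k1, k2, k3} : Finset (Fin N))
        (fun k => m k i)
      have hcompl : (∏ k ∈ ({k0, k1, k2, k3} : Finset (Fin N))ᶜ, m k i) ≤ 1 :=
        Finset.prod_le_one (fun k _ => hm_nonneg k i) (fun k _ => hm_le_one k i)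
      have hSprod : (∏ k ∈ ({k0, k1, k2, k3} : Finset (Fin N)), m k i) =
          m k0 i * m k1 i * m k2 i * m k3 i := by
        have h01 : k0 ≠ k1 := by simp [k0, k1, Fin.ext_iff]
        have h02 : k0 ≠ k2 := by simp [k0, k2, Fin.ext_iff]
        have h03 : k0 ≠ k3 := by simp [k0, k3, Fin.ext_iff]
        have h12 : k1 ≠ k2 := by simp [k1, k2, Fin.ext_iff]
        have h13 : k1 ≠ k3 := by simp [k1, k3, Fin.ext_iff]
        have h23 : k2 ≠ k3 := by simp [k2, k3, Fin.ext_iff]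
        rw [Finset.prod_insert (by simp [h01, h02, h03]),
          Finset.prod_insert (by simp [h12, h13]),
          Finset.prod_insert (by simp [h23]), Finset.prod_singleton]
        ring
      have hSnonneg : 0 ≤ (∏ k ∈ ({k0, k1, k2, k3} : Finset (Fin N)), m k i) :=
        Finset.prod_nonneg (fun k _ => hm_nonneg k i)
      calc (∏ k : Fin N, m k i)
          = (∏ k ∈ ({k0, k1, k2, k3} : Finset (Fin N)), m k i) *
            (∏ k ∈ ({k0, k1, k2, k3} : Finset (Fin N))ᶜ, m k i) := hsplit.symm
        _ ≤ (∏ k ∈ ({k0, k1, k2, k3} : Finset (Fin N)), m k i) * 1 := by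
            exact mul_le_mul_of_nonneg_left hcompl hSnonneg
        _ = m k0 i * m k1 i * m k2 i * m k3 i := by rw [mul_one, hSprod]
    have hfin : p (fun _ => i) ≤ Real.sqrt (∏ k : Fin N, m k i) := by
      simpa using hfinner (fun _ => i)
    have h4 : Real.sqrt (p (fun _ => i)) ≤
        Real.sqrt (Real.sqrt (m k0 i * m k1 i * m k2 i * m k3 i)) := by
      apply Real.sqrt_le_sqrt
      exact hfin.trans (Real.sqrt_le_sqrt hprod_le)
    refine h4.trans ?_
    have habcd : m k0 i * m k1 i * m k2 i * m k3 i =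
        (m k0 i * m k1 i) * (m k2 i * m k3 i) := by ring
    rw [habcd, Real.sqrt_mul (mul_nonneg (hm_nonneg k0 i) (hm_nonneg k1 i))]
    have hab : Real.sqrt (m k0 i * m k1 i) ≤ (m k0 i + m k1 i) / 2 :=
      sqrt_mul_le_half _ _ (hm_nonneg k0 i) (hm_nonneg k1 i)
    have hcd : Real.sqrt (m k2 i * m k3 i) ≤ (m k2 i + m k3 i) / 2 :=
      sqrt_mul_le_half _ _ (hm_nonneg k2 i) (hm_nonneg k3 i)
    have houter : Real.sqrt (Real.sqrt (m k0 i * m k1 i) * Real.sqrt (m k2 i * m k3 i)) ≤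
        (Real.sqrt (m k0 i * m k1 i) + Real.sqrt (m k2 i * m k3 i)) / 2 :=
      sqrt_mul_le_half _ _ (Real.sqrt_nonneg _) (Real.sqrt_nonneg _)
    refine houter.trans ?_
    linarith
  have hsum_le : (∑ i : Fin d, Real.sqrt (p (fun _ => i))) ≤ 1 := by
    calc (∑ i : Fin d, Real.sqrt (p (fun _ => i)))
        ≤ ∑ i : Fin d, (m k0 i + m k1 i + m k2 i + m k3 i) / 4 :=
          Finset.sum_le_sum (fun i _ => key i)
      _ = 1 := by
          rw [← Finset.sum_div, Finset.sum_add_distrib, Finset.sum_add_distrib,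
            Finset.sum_add_distrib, hm_sum, hm_sum, hm_sum, hm_sum]
          norm_num
  refine ⟨hsum_le, ?_⟩
  have hnn : 0 ≤ ∑ i : Fin d, Real.sqrt (p (fun _ => i)) :=
    Finset.sum_nonneg (fun i _ => Real.sqrt_nonneg _)
  have hsq : (∑ i : Fin d, Real.sqrt (p (fun _ => i))) ^ 2 ≤ 1 := by nlinarith
  have hdpos : (0:ℝ) < d := by positivity
  have : (1 / (d:ℝ)) * (∑ i : Fin d, Real.sqrt (p (fun _ => i))) ^ 2 ≤ (1 / (d:ℝ)) * 1 := by
    apply mul_le_mul_of_nonneg_left hsq (by positivity)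
  simpa using this
end

section
/- Let zA, zB, zC, zAB, zAC, zBC be real numbers satisfying: 0 ≤ zA ≤ 1; 0 ≤ zB ≤ 1; −1 ≤ zC < 0; −1 ≤ zAB ≤ 1; −1 ≤ zAC ≤ 1; −1 ≤ zBC ≤ 1; the inequality (1 + zA + zB + zAB)² + (1 + zA − zC + zAC)² + (1 + zB − zC + zBC)² ≤ 6·(1 + zA)·(1 + zB)·(1 − zC) + 8·zC·(zA + zB + zA·zB); and the inequality 2 − zA − zB + zC + zAB − zAC − zBC ≥ 0. Then (zAB + zAC + zBC)/3 ≤ (42 − 5·√42)/21, and consequently (1 + 3·(zAB + zAC + zBC)/3)/4 ≤ (49 − 5·√42)/28. -/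
set_option maxHeartbeats 1000000 in
theorem master (X S m q r : ℝ) (hr2 : r^2 = 42) (hr6 : 6 ≤ r) (hr7 : r ≤ 7)
    (hX : 0 ≤ X) (hS : 0 ≤ S) (hm1 : 1 ≤ m) (hm2 : m ≤ 2)
    (hq0 : 0 ≤ q) (hq1 : q ≤ 1)
    (hC1 : S ≤ X + 5 - 2*m + q)
    (hC2 : X^2 + S^2/2 ≤ (6-2*q)*m^2 + 8*q) :
    7*(X+S) ≤ 35 - 5*r + 28*m + 14*q := by
  have hrpos : (0:ℝ) < r := by linarith
  rcases le_or_gt m (29/20) with hm | hm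
  · -- case 1: pure ellipse bound
    have hr315 : 315*r ≤ 2094.75 := by nlinarith [hr2]
    have hr441 : 441*r ≤ 2868.75 := by nlinarith [hr2]
    have hH : 882*m^2 + 882*q ≤ (35 - 5*r + 28*m + 14*q)^2 := by
      nlinarith [sq_nonneg (392*q + 882 - 140*r), mul_nonneg hq0 (sub_nonneg.mpr hm1),
        mul_nonneg (sub_nonneg.mpr hm1) (sub_nonneg.mpr hm), hr2, hr315, hr441]
    have hRHS : 0 ≤ 35 - 5*r + 28*m + 14*q := by linarith
    have hR2 : 147*((6-2*q)*m^2 + 8*q) ≤ (35 - 5*r + 28*m + 14*q)^2 := by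
      nlinarith [hH, mul_nonneg hq0 (sub_nonneg.mpr hm1),
        mul_nonneg (mul_nonneg hq0 (sub_nonneg.mpr hm1)) (by linarith : (0:ℝ) ≤ m + 1)]
    nlinarith [sq_nonneg (2*X - S), hC2, hR2, hRHS, mul_nonneg hX hS, sq_nonneg (X + S)]
  · -- case 2
    have hB : 0 ≤ q*((420+56*r)*m + (7+r)^2*q + 28*(23-2*r)*m^2 - 112*(23-2*r)) := by
      have h1 : 0 ≤ (420+56*r)*m + (7+r)^2*q + 28*(23-2*r)*m^2 - 112*(23-2*r) := by
        nlinarith [mul_nonneg hq0 (sq_nonneg (7+r)), sq_nonneg (m - 29/20)]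
      exact mul_nonneg hq0 h1
    have hslack : 0 ≤ 14*(23-2*r)*(((6-2*q)*m^2+8*q) - (X^2 + S^2/2)) :=
      mul_nonneg (by linarith) (by linarith)
    have key : (2*(21-r)*m + (7+r)*q)^2 - ((14-r)*X + r*S)^2 =
        1/2*((14-r)*S - 2*r*X)^2
        + 14*(23-2*r)*(((6-2*q)*m^2+8*q) - (X^2 + S^2/2))
        + q*((420+56*r)*m + (7+r)^2*q + 28*(23-2*r)*m^2 - 112*(23-2*r))
        + (r^2 - 42)*(4*m^2 - 4*m*q - 3/2*S^2 - 3*X^2) := by ring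
    rw [hr2] at key
    have hM2 : ((14-r)*X + r*S)^2 ≤ (2*(21-r)*m + (7+r)*q)^2 := by
      nlinarith [key, hslack, hB, sq_nonneg ((14-r)*S - 2*r*X)]
    have huv : 0 ≤ (14-r)*X + r*S := by
      nlinarith [mul_nonneg (by linarith : (0:ℝ) ≤ 14 - r) hX, mul_nonneg hrpos.le hS]
    have hMpos : 0 ≤ 2*(21-r)*m + (7+r)*q := by
      nlinarith [mul_nonneg hq0 (by linarith : (0:ℝ) ≤ 7+r),
        mul_nonneg (by linarith : (0:ℝ) ≤ 21 - r) (by linarith : (0:ℝ) ≤ m)]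
    have hM : (14-r)*X + r*S ≤ 2*(21-r)*m + (7+r)*q := by
      nlinarith [hM2, huv, hMpos]
    have hC1' : 0 ≤ (7-r)*(X + 5 - 2*m + q - S) :=
      mul_nonneg (by linarith) (by linarith)
    nlinarith [hM, hC1']

/-- Case 1 optimization, negative `⟨Z_C⟩`: under Gisin's inequality and
the positivity constraint for the outcome `(1,1,0)`, the averaged two-body Z-correlation
is at most `(42 − 5√42)/21`, and hence `(1 + 3·z₂)/4 ≤ (49 − 5√42)/28`. -/
theorem case1_optimization_bound (zA zB zC zAB zAC zBC : ℝ)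
    (hA0 : 0 ≤ zA) (hA1 : zA ≤ 1)
    (hB0 : 0 ≤ zB) (hB1 : zB ≤ 1)
    (hC0 : -1 ≤ zC) (hC1 : zC < 0)
    (hAB0 : -1 ≤ zAB) (hAB1 : zAB ≤ 1)
    (hAC0 : -1 ≤ zAC) (hAC1 : zAC ≤ 1)
    (hBC0 : -1 ≤ zBC) (hBC1 : zBC ≤ 1)
    (hgisin : (1 + zA + zB + zAB) ^ 2 + (1 + zA - zC + zAC) ^ 2 +
        (1 + zB - zC + zBC) ^ 2 ≤
      6 * (1 + zA) * (1 + zB) * (1 - zC) + 8 * zC * (zA + zB + zA * zB))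
    (hpos : 2 - zA - zB + zC + zAB - zAC - zBC ≥ 0) :
    (zAB + zAC + zBC) / 3 ≤ (42 - 5 * Real.sqrt 42) / 21 ∧
    (1 + 3 * ((zAB + zAC + zBC) / 3)) / 4 ≤ (49 - 5 * Real.sqrt 42) / 28 := by
  set r := Real.sqrt 42 with hrdef
  have hr2 : r ^ 2 = 42 := Real.sq_sqrt (by norm_num)
  have hr0 : 0 ≤ r := Real.sqrt_nonneg 42
  have hr6 : 6 ≤ r := by nlinarith [hr2, hr0]
  have hr7 : r ≤ 7 := by nlinarith [hr2, hr0]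
  have hkey : 7 * (zAB + zAC + zBC) ≤ 42 - 5 * r := by
    have h := master (1 + zA + zB + zAB) (2 + zA + zB - 2*zC + zAC + zBC)
        ((2 + zA + zB)/2) (-zC) r hr2 hr6 hr7
        (by linarith) (by linarith) (by linarith) (by linarith) (by linarith) (by linarith)
        (by linarith)
        (by nlinarith [hgisin, sq_nonneg ((zA - zC + zAC) - (zB - zC + zBC)),
          mul_nonneg (by linarith : (0:ℝ) ≤ 6 + 2*zC) (sq_nonneg (zA - zB))])
    linarith
  constructor
  · linarith
  · linarith
end

section
/- Let z₁, z₂, z₃ be real numbers satisfying: 0 ≤ z₁ ≤ 1; −1 ≤ z₂ ≤ 1; −1 ≤ z₃ ≤ 1; 3·(1 + 2·z₁ + z₂)² ≤ 6·(1 + z₁)³; 0 ≤ 1 + 3·z₁ + 3·z₂ + z₃; 0 ≤ 1 − 3·z₁ + 3·z₂ − z₃; and 1 − 3·z₁ + 3·z₂ − z₃ ≤ 2·√2·(1 − z₁)^{3/2}. Then (1/16)·( √(1 + 3z₁ + 3z₂ + z₃) + √(1 − 3z₁ + 3z₂ − z₃) )² ≤ 0.618. -/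
set_option maxHeartbeats 1000000 in
private lemma ghz_key1 (u v w : ℝ) (hv0 : 0 ≤ v) (hw0 : 0 ≤ w)
    (huv : u^2 + v^2 = 2) (hw : w^2 = 2)
    (huL : 1 ≤ u) (huR : u ≤ 1.142) :
    (1 + (7/10:ℝ))*(6*w*u^3 - 12*u^2 + 8) + ((10/7:ℝ) - (7/10:ℝ))*(2*w*v^3) ≤ 9.888 := by
  have hw1 : (1.4142:ℝ) ≤ w := by nlinarith
  have hw2 : w ≤ 1.41422 := by nlinarith
  have hv1 : v ≤ 1.0 := by nlinarith [sq_nonneg (u - 1), sq_nonneg (v - 1.0)]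
  have hv2 : (0.834:ℝ) ≤ v := by nlinarith [sq_nonneg (u - 1.142), sq_nonneg (v - 0.834)]
  nlinarith [mul_nonneg (sub_nonneg.2 huL) (sub_nonneg.2 huR), mul_nonneg (sub_nonneg.2 hv2) (sub_nonneg.2 hv1), sq_nonneg (u - 1.071), sq_nonneg (v - 0.917), mul_nonneg (mul_nonneg (sub_nonneg.2 huL) (sub_nonneg.2 huR)) hw0, mul_nonneg (mul_nonneg (sub_nonneg.2 hv2) (sub_nonneg.2 hv1)) hw0]
set_option maxHeartbeats 1000000 in
private lemma ghz_key2 (u v w : ℝ) (hv0 : 0 ≤ v) (hw0 : 0 ≤ w)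
    (huv : u^2 + v^2 = 2) (hw : w^2 = 2)
    (huL : 1.142 ≤ u) (huR : u ≤ 1.207) :
    (1 + (53/100:ℝ))*(6*w*u^3 - 12*u^2 + 8) + ((100/53:ℝ) - (53/100:ℝ))*(2*w*v^3) ≤ 9.888 := by
  have hw1 : (1.4142:ℝ) ≤ w := by nlinarith
  have hw2 : w ≤ 1.41422 := by nlinarith
  have hv1 : v ≤ 0.835 := by nlinarith [sq_nonneg (u - 1.142), sq_nonneg (v - 0.835)]
  have hv2 : (0.736:ℝ) ≤ v := by nlinarith [sq_nonneg (u - 1.207), sq_nonneg (v - 0.736)]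
  nlinarith [mul_nonneg (sub_nonneg.2 huL) (sub_nonneg.2 huR), mul_nonneg (sub_nonneg.2 hv2) (sub_nonneg.2 hv1), sq_nonneg (u - 1.1745), sq_nonneg (v - 0.7855), mul_nonneg (mul_nonneg (sub_nonneg.2 huL) (sub_nonneg.2 huR)) hw0, mul_nonneg (mul_nonneg (sub_nonneg.2 hv2) (sub_nonneg.2 hv1)) hw0]
set_option maxHeartbeats 1000000 in
private lemma ghz_key3 (u v w : ℝ) (hv0 : 0 ≤ v) (hw0 : 0 ≤ w)
    (huv : u^2 + v^2 = 2) (hw : w^2 = 2)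
    (huL : 1.207 ≤ u) (huR : u ≤ 1.232) :
    (1 + (23/50:ℝ))*(6*w*u^3 - 12*u^2 + 8) + ((50/23:ℝ) - (23/50:ℝ))*(2*w*v^3) ≤ 9.888 := by
  have hw1 : (1.4142:ℝ) ≤ w := by nlinarith
  have hw2 : w ≤ 1.41422 := by nlinarith
  have hv1 : v ≤ 0.737 := by nlinarith [sq_nonneg (u - 1.207), sq_nonneg (v - 0.737)]
  have hv2 : (0.694:ℝ) ≤ v := by nlinarith [sq_nonneg (u - 1.232), sq_nonneg (v - 0.694)]
  nlinarith [mul_nonneg (sub_nonneg.2 huL) (sub_nonneg.2 huR), mul_nonneg (sub_nonneg.2 hv2) (sub_nonneg.2 hv1), sq_nonneg (u - 1.2195), sq_nonneg (v - 0.7155), mul_nonneg (mul_nonneg (sub_nonneg.2 huL) (sub_nonneg.2 huR)) hw0, mul_nonneg (mul_nonneg (sub_nonneg.2 hv2) (sub_nonneg.2 hv1)) hw0]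
set_option maxHeartbeats 1000000 in
private lemma ghz_key4 (u v w : ℝ) (hv0 : 0 ≤ v) (hw0 : 0 ≤ w)
    (huv : u^2 + v^2 = 2) (hw : w^2 = 2)
    (huL : 1.232 ≤ u) (huR : u ≤ 1.253) :
    (1 + (43/100:ℝ))*(6*w*u^3 - 12*u^2 + 8) + ((100/43:ℝ) - (43/100:ℝ))*(2*w*v^3) ≤ 9.888 := by
  have hw1 : (1.4142:ℝ) ≤ w := by nlinarith
  have hw2 : w ≤ 1.41422 := by nlinarith
  have hv1 : v ≤ 0.695 := by nlinarith [sq_nonneg (u - 1.232), sq_nonneg (v - 0.695)]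
  have hv2 : (0.655:ℝ) ≤ v := by nlinarith [sq_nonneg (u - 1.253), sq_nonneg (v - 0.655)]
  nlinarith [mul_nonneg (sub_nonneg.2 huL) (sub_nonneg.2 huR), mul_nonneg (sub_nonneg.2 hv2) (sub_nonneg.2 hv1), sq_nonneg (u - 1.2425), sq_nonneg (v - 0.675), mul_nonneg (mul_nonneg (sub_nonneg.2 huL) (sub_nonneg.2 huR)) hw0, mul_nonneg (mul_nonneg (sub_nonneg.2 hv2) (sub_nonneg.2 hv1)) hw0]
set_option maxHeartbeats 1000000 in
private lemma ghz_key5 (u v w : ℝ) (hv0 : 0 ≤ v) (hw0 : 0 ≤ w)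
    (huv : u^2 + v^2 = 2) (hw : w^2 = 2)
    (huL : 1.253 ≤ u) (huR : u ≤ 1.308) :
    (1 + (37/100:ℝ))*(6*w*u^3 - 12*u^2 + 8) + ((100/37:ℝ) - (37/100:ℝ))*(2*w*v^3) ≤ 9.888 := by
  have hw1 : (1.4142:ℝ) ≤ w := by nlinarith
  have hw2 : w ≤ 1.41422 := by nlinarith
  have hv1 : v ≤ 0.656 := by nlinarith [sq_nonneg (u - 1.253), sq_nonneg (v - 0.656)]
  have hv2 : (0.537:ℝ) ≤ v := by nlinarith [sq_nonneg (u - 1.308), sq_nonneg (v - 0.537)]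
  nlinarith [mul_nonneg (sub_nonneg.2 huL) (sub_nonneg.2 huR), mul_nonneg (sub_nonneg.2 hv2) (sub_nonneg.2 hv1), sq_nonneg (u - 1.2805), sq_nonneg (v - 0.5965), mul_nonneg (mul_nonneg (sub_nonneg.2 huL) (sub_nonneg.2 huR)) hw0, mul_nonneg (mul_nonneg (sub_nonneg.2 hv2) (sub_nonneg.2 hv1)) hw0]
set_option maxHeartbeats 1000000 in
private lemma ghz_key6 (u v w : ℝ) (hv0 : 0 ≤ v) (hw0 : 0 ≤ w)
    (huv : u^2 + v^2 = 2) (hw : w^2 = 2)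
    (huL : 1.308 ≤ u) (huR : u ≤ 1.4143) :
    (1 + (11/50:ℝ))*(6*w*u^3 - 12*u^2 + 8) + ((50/11:ℝ) - (11/50:ℝ))*(2*w*v^3) ≤ 9.888 := by
  have hw1 : (1.4142:ℝ) ≤ w := by nlinarith
  have hw2 : w ≤ 1.41422 := by nlinarith
  have hv1 : v ≤ 0.538 := by nlinarith [sq_nonneg (u - 1.308), sq_nonneg (v - 0.538)]
  have hv2 : (0.0:ℝ) ≤ v := by nlinarith [sq_nonneg (u - 1.4143), sq_nonneg (v - 0.0)]
  nlinarith [mul_nonneg (sub_nonneg.2 huL) (sub_nonneg.2 huR), mul_nonneg (sub_nonneg.2 hv2) (sub_nonneg.2 hv1), sq_nonneg (u - 1.3611), sq_nonneg (v - 0.269), mul_nonneg (mul_nonneg (sub_nonneg.2 huL) (sub_nonneg.2 huR)) hw0, mul_nonneg (mul_nonneg (sub_nonneg.2 hv2) (sub_nonneg.2 hv1)) hw0]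

set_option maxHeartbeats 2000000 in
/-- Case 2 optimization, nonnegative local Z-expectations: under Gisin's
inequality and the Finner inequality, the symmetrized GHZ-fidelity expression is at most
`0.618`. -/
theorem case2_optimization_bound (z1 z2 z3 : ℝ)
    (h10 : 0 ≤ z1) (h11 : z1 ≤ 1)
    (h20 : -1 ≤ z2) (h21 : z2 ≤ 1)
    (h30 : -1 ≤ z3) (h31 : z3 ≤ 1)
    (hgisin : 3 * (1 + 2 * z1 + z2) ^ 2 ≤ 6 * (1 + z1) ^ 3)
    (hp1 : 0 ≤ 1 + 3 * z1 + 3 * z2 + z3)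
    (hp2 : 0 ≤ 1 - 3 * z1 + 3 * z2 - z3)
    (hfinner : 1 - 3 * z1 + 3 * z2 - z3 ≤
      2 * Real.sqrt 2 * (1 - z1) ^ ((3 : ℝ) / 2)) :
    (1 / 16) *
        (Real.sqrt (1 + 3 * z1 + 3 * z2 + z3) +
          Real.sqrt (1 - 3 * z1 + 3 * z2 - z3)) ^ 2 ≤ 0.618 := by
  set a := Real.sqrt (1 + 3 * z1 + 3 * z2 + z3) with ha_def
  set b := Real.sqrt (1 - 3 * z1 + 3 * z2 - z3) with hb_def
  set u := Real.sqrt (1 + z1) with hu_def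
  set v := Real.sqrt (1 - z1) with hv_def
  set w := Real.sqrt 2 with hw_def
  have ha0 : 0 ≤ a := Real.sqrt_nonneg _
  have hb0 : 0 ≤ b := Real.sqrt_nonneg _
  have hu0 : 0 ≤ u := Real.sqrt_nonneg _
  have hv0 : 0 ≤ v := Real.sqrt_nonneg _
  have hw0 : 0 ≤ w := Real.sqrt_nonneg _
  have ha2 : a^2 = 1 + 3 * z1 + 3 * z2 + z3 := Real.sq_sqrt hp1
  have hb2 : b^2 = 1 - 3 * z1 + 3 * z2 - z3 := Real.sq_sqrt hp2
  have hu2 : u^2 = 1 + z1 := Real.sq_sqrt (by linarith)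
  have hv2 : v^2 = 1 - z1 := Real.sq_sqrt (by linarith)
  have hw2c : w^2 = 2 := Real.sq_sqrt (by norm_num)
  have huv : u^2 + v^2 = 2 := by rw [hu2, hv2]; ring
  have hrpow : (1 - z1) ^ ((3 : ℝ) / 2) = v ^ 3 := by
    rw [show ((3:ℝ)/2) = (1/2) * (3:ℕ) by norm_num,
      Real.rpow_mul (by linarith : (0:ℝ) ≤ 1 - z1),
      Real.rpow_natCast, hv_def, ← Real.sqrt_eq_rpow]
  have hfin' : b^2 ≤ 2*w*v^3 := by
    rw [hb2]
    calc 1 - 3 * z1 + 3 * z2 - z3 ≤ 2 * w * (1 - z1) ^ ((3 : ℝ) / 2) := hfinner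
      _ = 2*w*v^3 := by rw [hrpow]
  have hx : 1 + 2*z1 + z2 ≤ w * u^3 := by
    have h0 : 0 ≤ 1 + 2*z1 + z2 := by linarith
    have h1 : (1 + 2*z1 + z2)^2 ≤ (w * u^3)^2 := by
      have he : (w * u^3)^2 = w^2 * (u^2)^3 := by ring
      rw [he, hw2c, hu2]; linarith
    calc 1 + 2*z1 + z2 = Real.sqrt ((1 + 2*z1 + z2)^2) := (Real.sqrt_sq h0).symm
      _ ≤ Real.sqrt ((w * u^3)^2) := Real.sqrt_le_sqrt h1
      _ = w * u^3 := Real.sqrt_sq (by positivity)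
  have hSg : a^2 + b^2 ≤ 6*w*u^3 - 12*u^2 + 8 := by nlinarith [hx, hu2, ha2, hb2]
  have hu1 : 1 ≤ u := by nlinarith
  have hwub : w ≤ 1.41422 := by nlinarith
  have huw : u ≤ 1.4143 := by nlinarith [sq_nonneg (u - 1.4143)]
  clear_value a b u v w
  clear hgisin hfinner hp1 hp2 ha_def hb_def hu_def hv_def hw_def ha2 hb2 hu2 hv2 hrpow hx h10 h11 h20 h21 h30 h31
  rcases le_or_gt u 1.142 with hc1 | hc1
  · have key := ghz_key1 u v w hv0 hw0 huv hw2c hu1 hc1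
    have hq : 2*a*b ≤ (7/10)*a^2 + (10/7)*b^2 := by nlinarith [sq_nonneg ((7/10)*a - b)]
    nlinarith [key, hSg, hfin', hq]
  rcases le_or_gt u 1.207 with hc2 | hc2
  · have key := ghz_key2 u v w hv0 hw0 huv hw2c hc1.le hc2
    have hq : 2*a*b ≤ (53/100)*a^2 + (100/53)*b^2 := by nlinarith [sq_nonneg ((53/100)*a - b)]
    nlinarith [key, hSg, hfin', hq]
  rcases le_or_gt u 1.232 with hc3 | hc3
  · have key := ghz_key3 u v w hv0 hw0 huv hw2c hc2.le hc3
    have hq : 2*a*b ≤ (23/50)*a^2 + (50/23)*b^2 := by nlinarith [sq_nonneg ((23/50)*a - b)]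
    nlinarith [key, hSg, hfin', hq]
  rcases le_or_gt u 1.253 with hc4 | hc4
  · have key := ghz_key4 u v w hv0 hw0 huv hw2c hc3.le hc4
    have hq : 2*a*b ≤ (43/100)*a^2 + (100/43)*b^2 := by nlinarith [sq_nonneg ((43/100)*a - b)]
    nlinarith [key, hSg, hfin', hq]
  rcases le_or_gt u 1.308 with hc5 | hc5
  · have key := ghz_key5 u v w hv0 hw0 huv hw2c hc4.le hc5
    have hq : 2*a*b ≤ (37/100)*a^2 + (100/37)*b^2 := by nlinarith [sq_nonneg ((37/100)*a - b)]
    nlinarith [key, hSg, hfin', hq]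
  · have key := ghz_key6 u v w hv0 hw0 huv hw2c hc5.le huw
    have hq : 2*a*b ≤ (11/50)*a^2 + (50/11)*b^2 := by nlinarith [sq_nonneg ((11/50)*a - b)]
    nlinarith [key, hSg, hfin', hq]
end

section
/- Let m, n ≥ 1 be natural numbers with m·n ≥ 3, and let Gr(m,n) be the m×n grid graph, i.e., the simple graph on Fin m × Fin n in which (i,j) and (i',j') are adjacent iff |i − i'| + |j − j'| = 1. Then there exist ⌊mn/3⌋ pairwise disjoint 3-element subsets of the vertex set Fin m × Fin n, each of which induces a connected subgraph of Gr(m,n). -/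
/-- The `m × n` grid graph on `Fin m × Fin n`: `(i,j)` and `(i',j')` are adjacent iff
`|i − i'| + |j − j'| = 1`. -/
def gridGraph (m n : ℕ) : SimpleGraph (Fin m × Fin n) where
  Adj p q :=
    |((p.1 : ℕ) : ℤ) - ((q.1 : ℕ) : ℤ)| + |((p.2 : ℕ) : ℤ) - ((q.2 : ℕ) : ℤ)| = 1
  symm := by
    constructor
    intro p q h
    rw [abs_sub_comm (((q.1 : ℕ) : ℤ)) (((p.1 : ℕ) : ℤ)),
      abs_sub_comm (((q.2 : ℕ) : ℤ)) (((p.2 : ℕ) : ℤ))]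
    exact h
  loopless := by
    constructor
    intro p h
    simp at h


/-!
Traversing the rows of the grid alternately left to right and right to left (a boustrophedon)
gives a Hamiltonian path of the grid. Cutting any Hamiltonian path into consecutive blocks of
three vertices gives `⌊mn/3⌋` disjoint triples, and each triple spans a path, so it induces a
connected subgraph.
-/

open Function

namespace SimpleGraph

variable {V W : Type*} {G : SimpleGraph V} {H : SimpleGraph W}

theorem Connected.induce_range (hH : H.Connected) (φ : H →g G) :
    (G.induce (Set.range φ)).Connected :=
  hH.map ⟨fun w => ⟨φ w, w, rfl⟩, φ.map_adj⟩ (by rintro ⟨_, w, rfl⟩; exact ⟨w, rfl⟩)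

def pathBlockIndex (N k : ℕ) : Fin (N / k) × Fin k ↪ Fin N :=
  finProdFinEquiv.toEmbedding.trans (Fin.castLEEmb (Nat.div_mul_le_self N k))

theorem pathBlockIndex_val {N k : ℕ} (x : Fin (N / k) × Fin k) :
    (pathBlockIndex N k x : ℕ) = x.2 + k * x.1 :=
  finProdFinEquiv_apply_val x

def pathBlockHom (N k : ℕ) (i : Fin (N / k)) : pathGraph k →g pathGraph N where
  toFun j := pathBlockIndex N k (i, j)
  map_rel' h := by
    simp only [pathGraph_adj, pathBlockIndex_val] at h ⊢
    omega

theorem exists_pairwise_disjoint_connected_blocks {N : ℕ} (φ : pathGraph N →g G)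
    (hφ : Injective φ) (k : ℕ) :
    ∃ f : Fin (N / k) → Finset V, (∀ i, (f i).card = k) ∧ Pairwise (Disjoint on f) ∧
      ∀ i, (G.induce (f i : Set V)).Connected := by
  have hinj : Injective (φ ∘ pathBlockIndex N k) := hφ.comp (pathBlockIndex N k).injective
  let block (i : Fin (N / k)) : Fin k ↪ V :=
    ⟨φ.comp (pathBlockHom N k i), hinj.comp (Prod.mk_right_injective i)⟩
  refine ⟨fun i => Finset.univ.map (block i), fun i => by simp, fun i i' hii' => ?_, fun i => ?_⟩
  · simp only [onFun, Finset.disjoint_left, Finset.mem_map, Finset.mem_univ, true_and]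
    rintro _ ⟨j, rfl⟩ ⟨j', hj'⟩
    exact hii' (congrArg Prod.fst (hinj hj').symm)
  · have hk : k ≠ 0 := by rintro rfl; rw [Nat.div_zero] at i; exact i.elim0
    obtain ⟨k, rfl⟩ := Nat.exists_eq_add_one_of_ne_zero hk
    rw [Finset.coe_map, Finset.coe_univ, Set.image_univ]
    exact (pathGraph_connected k).induce_range _

end SimpleGraph

open SimpleGraph

theorem gridGraph_eq_boxProd (m n : ℕ) : gridGraph m n = pathGraph m □ pathGraph n := by
  ext p q
  simp only [gridGraph, boxProd_adj, pathGraph_adj, Fin.ext_iff]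
  rcases abs_cases (((p.1 : ℕ) : ℤ) - (q.1 : ℕ)) with ⟨h1, _⟩ | ⟨h1, _⟩ <;>
    rcases abs_cases (((p.2 : ℕ) : ℤ) - (q.2 : ℕ)) with ⟨h2, _⟩ | ⟨h2, _⟩ <;>
    rw [h1, h2] <;> omega

theorem Nat.add_one_div_mod_cases {n : ℕ} (hn : 0 < n) (k : ℕ) :
    (k + 1) / n = k / n ∧ (k + 1) % n = k % n + 1 ∧ k % n + 1 < n ∨
      (k + 1) / n = k / n + 1 ∧ (k + 1) % n = 0 ∧ k % n + 1 = n := by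
  have hdecomp := Nat.mod_add_div k n
  have hlt := Nat.mod_lt k hn
  by_cases h : k % n + 1 < n
  · left; rw [← and_assoc, Nat.div_mod_unique hn]; omega
  · right; rw [← and_assoc, Nat.div_mod_unique hn, Nat.mul_add_one]; omega

/-- Row `k / n` is traversed left to right when `k / n` is even and right to left when it is odd. -/
def gridSnake (m n : ℕ) : Fin (m * n) ≃ Fin m × Fin n :=
  finProdFinEquiv.symm.trans <|
    Equiv.prodShear (Equiv.refl _) fun i => if Even (i : ℕ) then Equiv.refl _ else Fin.revPerm

theorem gridSnake_fst (m n : ℕ) (k : Fin (m * n)) : ((gridSnake m n k).1 : ℕ) = k / n := rfl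

theorem gridSnake_snd (m n : ℕ) (k : Fin (m * n)) :
    ((gridSnake m n k).2 : ℕ) = if Even (k / n : ℕ) then k % n else n - (k % n + 1) := by
  change ((if Even (k / n : ℕ) then Equiv.refl (Fin n) else Fin.revPerm) k.modNat : ℕ) = _
  split_ifs <;> simp

theorem gridSnake_adj_of_add_one_eq {m n : ℕ} {k l : Fin (m * n)} (hkl : (k : ℕ) + 1 = l) :
    (pathGraph m □ pathGraph n).Adj (gridSnake m n k) (gridSnake m n l) := by
  have hn : 0 < n := Nat.pos_of_ne_zero fun hn => by subst hn; exact k.elim0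
  have hlt := Nat.mod_lt k hn
  simp only [boxProd_adj, pathGraph_adj, Fin.ext_iff, gridSnake_fst, gridSnake_snd]
  rw [← hkl]
  rcases Nat.add_one_div_mod_cases hn k with ⟨hdiv, hmod, hnext⟩ | ⟨hdiv, hmod, hlast⟩
  · rw [hdiv, hmod]
    split_ifs <;> omega
  · simp only [hdiv, hmod, Nat.even_add_one, true_or, true_and]
    split_ifs <;> omega

def gridSnakeHom (m n : ℕ) : pathGraph (m * n) →g gridGraph m n where
  toFun := gridSnake m n
  map_rel' h := by
    rw [gridGraph_eq_boxProd]
    rcases pathGraph_adj.mp h with h | h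
    exacts [gridSnake_adj_of_add_one_eq h, (gridSnake_adj_of_add_one_eq h).symm]

theorem grid_packing_connected_triples_general (m n : ℕ) :
    ∃ f : Fin (m * n / 3) → Finset (Fin m × Fin n),
      (∀ i, (f i).card = 3) ∧
      (∀ i j, i ≠ j → Disjoint (f i) (f j)) ∧
      (∀ i, ((gridGraph m n).induce (↑(f i) : Set (Fin m × Fin n))).Connected) := by
  obtain ⟨f, hcard, hdisj, hconn⟩ :=
    exists_pairwise_disjoint_connected_blocks (gridSnakeHom m n) (gridSnake m n).injective 3
  exact ⟨f, hcard, fun i j hij => hdisj hij, hconn⟩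

/-- the vertices of the `m × n` grid graph (`m·n ≥ 3`) contain
`⌊mn/3⌋` pairwise disjoint 3-element subsets, each inducing a connected subgraph. -/
theorem grid_packing_connected_triples (m n : ℕ) (hm : 1 ≤ m) (hn : 1 ≤ n)
    (hmn : 3 ≤ m * n) :
    ∃ f : Fin (m * n / 3) → Finset (Fin m × Fin n),
      (∀ i, (f i).card = 3) ∧
      (∀ i j, i ≠ j → Disjoint (f i) (f j)) ∧
      (∀ i, ((gridGraph m n).induce (↑(f i) : Set (Fin m × Fin n))).Connected) :=
  grid_packing_connected_triples_general m n
end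

section
/- Let α and β be finite nonempty types, let ρ be a positive semidefinite complex matrix indexed by α × β, let φ : α → ℂ be any vector and τ : β → ℂ a unit vector (Σ_k |τ(k)|² = 1). Then (φ ⊗ τ)† ρ (φ ⊗ τ) ≤ Σ_{k ∈ β} (φ ⊗ e_k)† ρ (φ ⊗ e_k), where e_k : β → ℂ is the k-th standard basis vector and (φ ⊗ τ)(a,b) = φ(a)·τ(b). In particular, the fidelity of ρ with the product pure state φ ⊗ τ is at most the fidelity of the partial trace of ρ over β with φ. -/
open scoped BigOperators
open Matrix ComplexOrder

/-!
Factor `ρ = Bᴴ B`, so that `v† ρ v = ‖B v‖²`. Since `φ ⊗ τ = Σ_k τ_k (φ ⊗ e_k)`, each coordinate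
of `B (φ ⊗ τ)` is `Σ_k τ_k (B (φ ⊗ e_k))_i`, and Cauchy–Schwarz against the unit vector `τ`
bounds its square by `Σ_k |(B (φ ⊗ e_k))_i|²`; summing over `i` gives the claim.
-/

theorem Complex.normSq_sum_mul_le {ι : Type*} [Fintype ι] (τ c : ι → ℂ) :
    normSq (∑ k, τ k * c k) ≤ (∑ k, normSq (τ k)) * ∑ k, normSq (c k) := by
  simp only [← Complex.sq_norm]
  calc ‖∑ k, τ k * c k‖ ^ 2 ≤ (∑ k, ‖τ k‖ * ‖c k‖) ^ 2 := by
        gcongr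
        exact (norm_sum_le _ _).trans_eq (by simp only [norm_mul])
    _ ≤ _ := Finset.sum_mul_sq_le_sq_mul_sq _ _ _

theorem Matrix.re_dotProduct_conjTranspose_mul_mulVec {m n : Type*} [Fintype m] [Fintype n]
    (B : Matrix m n ℂ) (v : n → ℂ) :
    (star v ⬝ᵥ (Bᴴ * B) *ᵥ v).re = ∑ i, Complex.normSq ((B *ᵥ v) i) := by
  rw [← mulVec_mulVec, dotProduct_mulVec, ← star_mulVec, dotProduct, Complex.re_sum]
  simp [Complex.normSq_apply, Complex.mul_re]

theorem Matrix.PosSemidef.re_dotProduct_mulVec_sum_smul_le {ι β : Type*} [Fintype ι] [Fintype β]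
    {ρ : Matrix ι ι ℂ} (hρ : ρ.PosSemidef) (τ : β → ℂ) (w : β → ι → ℂ) :
    (star (∑ k, τ k • w k) ⬝ᵥ ρ *ᵥ ∑ k, τ k • w k).re ≤
      (∑ k, Complex.normSq (τ k)) * ∑ k, (star (w k) ⬝ᵥ ρ *ᵥ w k).re := by
  classical
  obtain ⟨B, rfl⟩ : ∃ B : Matrix ι ι ℂ, ρ = Bᴴ * B := by
    open scoped MatrixOrder in exact CStarAlgebra.nonneg_iff_eq_star_mul_self.mp hρ.nonneg
  simp only [re_dotProduct_conjTranspose_mul_mulVec]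
  rw [mulVec_sum, Finset.sum_comm, Finset.mul_sum]
  gcongr with i
  simpa only [mulVec_smul, Finset.sum_apply, Pi.smul_apply, smul_eq_mul] using
    Complex.normSq_sum_mul_le τ fun k => (B *ᵥ w k) i

theorem product_fidelity_le_partial_trace_general {α β : Type*}
    [Fintype α] [Fintype β] [DecidableEq β]
    (ρ : Matrix (α × β) (α × β) ℂ) (hρ : ρ.PosSemidef)
    (φ : α → ℂ) (τ : β → ℂ) (hτ : ∑ k : β, Complex.normSq (τ k) = 1) :
    (star (fun p : α × β => φ p.1 * τ p.2) ⬝ᵥ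
        ρ *ᵥ (fun p : α × β => φ p.1 * τ p.2)).re ≤
      ∑ k : β,
        (star (fun p : α × β => φ p.1 * (if p.2 = k then 1 else 0)) ⬝ᵥ
          ρ *ᵥ (fun p : α × β => φ p.1 * (if p.2 = k then 1 else 0))).re := by
  have hdecomp : (fun p : α × β => φ p.1 * τ p.2) =
      ∑ k, τ k • fun p : α × β => φ p.1 * (if p.2 = k then 1 else 0) := by
    ext p
    simp [Finset.sum_apply, mul_comm]
  rw [hdecomp]
  simpa only [hτ, one_mul] using hρ.re_dotProduct_mulVec_sum_smul_le τ _

/-- for a positive semidefinite `ρ` on a bipartite system `α × β`, any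
vector `φ` on `α` and any unit vector `τ` on `β`, the fidelity of `ρ` with the product
vector `φ ⊗ τ` is at most `Σ_k (φ ⊗ e_k)† ρ (φ ⊗ e_k)`, i.e., at most the fidelity of
the partial trace of `ρ` over `β` with `φ`. -/
theorem product_fidelity_le_partial_trace {α β : Type*}
    [Fintype α] [Fintype β] [Nonempty α] [Nonempty β] [DecidableEq β]
    (ρ : Matrix (α × β) (α × β) ℂ) (hρ : ρ.PosSemidef)
    (φ : α → ℂ) (τ : β → ℂ) (hτ : ∑ k : β, Complex.normSq (τ k) = 1) :
    (star (fun p : α × β => φ p.1 * τ p.2) ⬝ᵥ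
        ρ *ᵥ (fun p : α × β => φ p.1 * τ p.2)).re ≤
      ∑ k : β,
        (star (fun p : α × β => φ p.1 * (if p.2 = k then 1 else 0)) ⬝ᵥ
          ρ *ᵥ (fun p : α × β => φ p.1 * (if p.2 = k then 1 else 0))).re :=
  product_fidelity_le_partial_trace_general ρ hρ φ τ hτ
end

section
/- Let d ≥ 2 and let ρ be a positive semidefinite complex matrix indexed by (Fin 3 → Fin d) with trace 1 (a tripartite density matrix with d-dimensional local systems). Define the diagonal outcome distribution p(x) = ρ(x, x) for x : Fin 3 → Fin d, with marginals p_A(i) = Σ_{x : x(0)=i} p(x), p_B(j) = Σ_{x : x(1)=j} p(x), p_C(k) = Σ_{x : x(2)=k} p(x). Suppose that for all i, j, k ∈ Fin d, p applied to the function (0↦i, 1↦j, 2↦k) is at most √(p_A(i)·p_B(j)·p_C(k)) (the Finner inequality). Let |GHZ_{3,d}⟩ ∈ ℂ^(Fin 3 → Fin d) be given by |GHZ_{3,d}⟩(x) = 1/√d if x is constant and 0 otherwise. Then ⟨GHZ_{3,d}| ρ |GHZ_{3,d}⟩ ≤ 1/√d. -/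
open scoped BigOperators
open Matrix ComplexOrder

/-!
Write `c i` for the constant configuration `(i, i, i)`. The GHZ fidelity is
`d⁻¹ ∑ᵢⱼ ρ(c i, c j)`, and since `ρ` is a Gram matrix this is at most `d⁻¹ (∑ᵢ √ρ(c i, c i))²`.
The Finner inequality bounds `√ρ(c i, c i)` by `(p_A(i) p_B(i) p_C(i) · 1)^{1/4}`, and Hölder's
inequality with four exponents `1/4` bounds the sum of these by `(1 · 1 · 1 · d)^{1/4}`, so the
fidelity is at most `d⁻¹ √d = 1/√d`.
-/

theorem Real.sqrt_sqrt_mul_mul_mul {a b : ℝ} (ha : 0 ≤ a) (hb : 0 ≤ b) (c e : ℝ) :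
    √√(a * b * c * e) = √√(a * b) * √√(c * e) := by
  rw [mul_assoc, Real.sqrt_mul (mul_nonneg ha hb), Real.sqrt_mul (Real.sqrt_nonneg _)]

theorem Real.sum_sqrt_sqrt_mul_le {ι : Type*} (s : Finset ι) {f g h k : ι → ℝ}
    (hf : ∀ i, 0 ≤ f i) (hg : ∀ i, 0 ≤ g i) (hh : ∀ i, 0 ≤ h i) (hk : ∀ i, 0 ≤ k i) :
    ∑ i ∈ s, √√(f i * g i * h i * k i) ≤
      √√((∑ i ∈ s, f i) * (∑ i ∈ s, g i) * (∑ i ∈ s, h i) * (∑ i ∈ s, k i)) := by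
  rw [Real.sqrt_sqrt_mul_mul_mul (Finset.sum_nonneg fun i _ => hf i)
    (Finset.sum_nonneg fun i _ => hg i)]
  simp_rw [Real.sqrt_sqrt_mul_mul_mul (hf _) (hg _)]
  calc ∑ i ∈ s, √√(f i * g i) * √√(h i * k i)
      ≤ √(∑ i ∈ s, √(f i * g i)) * √(∑ i ∈ s, √(h i * k i)) :=
        Real.sum_sqrt_mul_sqrt_le s (fun _ => Real.sqrt_nonneg _) fun _ => Real.sqrt_nonneg _
    _ ≤ _ := by
        simp_rw [Real.sqrt_mul' _ (hg _), Real.sqrt_mul' _ (hk _),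
          Real.sqrt_mul' _ (Finset.sum_nonneg fun i _ => hg i),
          Real.sqrt_mul' _ (Finset.sum_nonneg fun i _ => hk i)]
        gcongr
        · exact Real.sum_sqrt_mul_sqrt_le s hf hg
        · exact Real.sum_sqrt_mul_sqrt_le s hh hk

theorem Matrix.PosSemidef.exists_eq_gram {𝕜 n : Type*} [RCLike 𝕜] [Fintype n] [DecidableEq n]
    {A : Matrix n n 𝕜} (hA : A.PosSemidef) : ∃ v : n → EuclideanSpace 𝕜 n, A = gram 𝕜 v := by
  open scoped MatrixOrder in
  obtain ⟨B, hB⟩ : ∃ B : Matrix n n 𝕜, A = Bᴴ * B :=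
    ⟨CFC.sqrt A, by
      rw [← star_eq_conjTranspose, (CFC.sqrt_nonneg A).isSelfAdjoint.star_eq,
        CFC.sqrt_mul_sqrt_self A hA.nonneg]⟩
  refine ⟨fun x => WithLp.toLp 2 fun k => B k x, ?_⟩
  ext x y
  simp [hB, gram_apply, Matrix.mul_apply, PiLp.inner_apply, mul_comm]

theorem Matrix.PosSemidef.re_sum_sum_le_sq_sum_sqrt_diag {𝕜 n : Type*} [RCLike 𝕜] [Fintype n]
    {A : Matrix n n 𝕜} (hA : A.PosSemidef) :
    RCLike.re (∑ x, ∑ y, A x y) ≤ (∑ x, √(RCLike.re (A x x))) ^ 2 := by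
  classical
  obtain ⟨v, rfl⟩ := hA.exists_eq_gram
  have hnorm : ∀ x, √(RCLike.re (gram 𝕜 v x x)) = ‖v x‖ := fun x => by
    rw [gram_apply, inner_self_eq_norm_sq, Real.sqrt_sq (norm_nonneg _)]
  calc RCLike.re (∑ x, ∑ y, gram 𝕜 v x y) = ‖∑ x, v x‖ ^ 2 := by
        simp_rw [gram_apply, ← inner_sum, ← sum_inner, inner_self_eq_norm_sq]
    _ ≤ (∑ x, ‖v x‖) ^ 2 := by gcongr; exact norm_sum_le _ _
    _ = _ := by simp_rw [hnorm]

theorem Matrix.star_dotProduct_mulVec_eq_submatrix_of_support_subset_range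
    {R m n : Type*} [CommSemiring R] [StarRing R] [Fintype m] [Fintype n]
    (A : Matrix n n R) {e : m → n} (he : Function.Injective e) {v : n → R}
    (hv : ∀ x ∉ Set.range e, v x = 0) :
    star v ⬝ᵥ A *ᵥ v = star (v ∘ e) ⬝ᵥ A.submatrix e e *ᵥ (v ∘ e) := by
  have hAv : ∀ x, (A *ᵥ v) x = (A.submatrix id e *ᵥ (v ∘ e)) x := fun x =>
    (Fintype.sum_of_injective e he _ _ (fun y hy => by simp [hv y hy]) fun _ => rfl).symm
  exact (Fintype.sum_of_injective e he _ _ (fun x hx => by simp [hv x hx])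
    fun i => by simp only [Pi.star_apply, Function.comp_apply, hAv]; rfl).symm

theorem star_dotProduct_mulVec_ghzVec (N d : ℕ) [NeZero N]
    (ρ : Matrix (Fin N → Fin d) (Fin N → Fin d) ℂ) :
    star (ghzVec N d) ⬝ᵥ ρ *ᵥ ghzVec N d =
      (d : ℂ)⁻¹ * ∑ i, ∑ j, ρ (fun _ => i) (fun _ => j) := by
  have hinj : Function.Injective fun (i : Fin d) (_ : Fin N) => i := fun i j h => congrFun h 0
  rw [star_dotProduct_mulVec_eq_submatrix_of_support_subset_range ρ hinj]
  · have hconst : ghzVec N d ∘ (fun i _ => i) = fun _ => ((1 / √d : ℝ) : ℂ) := by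
      ext i; simp [ghzVec]
    rw [hconst]
    have hr : star ((1 / √d : ℝ) : ℂ) * ((1 / √d : ℝ) : ℂ) = (d : ℂ)⁻¹ := by
      rw [Complex.star_def, Complex.conj_ofReal, ← Complex.ofReal_mul, div_mul_div_comm, one_mul,
        Real.mul_self_sqrt d.cast_nonneg]
      push_cast
      rw [one_div]
    simp only [dotProduct, mulVec, Pi.star_apply, submatrix_apply, Finset.mul_sum]
    refine Finset.sum_congr rfl fun i _ => Finset.sum_congr rfl fun j _ => ?_
    rw [mul_left_comm, hr, mul_comm]
  · intro x hx
    simp only [ghzVec, ite_eq_right_iff]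
    exact fun h => absurd ⟨x 0, funext fun j => h 0 j⟩ hx

section Marginal

variable {ι α : Type*} [Fintype ι] [DecidableEq ι] [Fintype α] [DecidableEq α]

def marginal (p : (ι → α) → ℝ) (t : ι) (a : α) : ℝ :=
  ∑ x, if x t = a then p x else 0

theorem marginal_nonneg {p : (ι → α) → ℝ} (hp : ∀ x, 0 ≤ p x) (t : ι) (a : α) :
    0 ≤ marginal p t a :=
  Finset.sum_nonneg fun x _ => by split_ifs <;> simp [hp x]

theorem sum_marginal (p : (ι → α) → ℝ) (t : ι) : ∑ a, marginal p t a = ∑ x, p x := by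
  simp only [marginal]
  rw [Finset.sum_comm]
  simp

theorem sum_sqrt_le_of_le_sqrt_marginal {p : (ι → α) → ℝ} (hp : ∀ x, 0 ≤ p x)
    (hp1 : ∑ x, p x = 1) (r s t : ι) {q : α → ℝ}
    (hq : ∀ a, q a ≤ √(marginal p r a * marginal p s a * marginal p t a)) :
    ∑ a, √(q a) ≤ √√(Fintype.card α) := by
  have hm := marginal_nonneg hp
  calc ∑ a, √(q a) ≤ ∑ a, √√(marginal p r a * marginal p s a * marginal p t a * 1) := by
        gcongr with a
        rw [mul_one]
        exact hq a
    _ ≤ √√((∑ a, marginal p r a) * (∑ a, marginal p s a) * (∑ a, marginal p t a) * ∑ _a : α, 1) :=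
        Real.sum_sqrt_sqrt_mul_le _ (hm r) (hm s) (hm t) fun _ => zero_le_one
    _ = √√(Fintype.card α) := by simp [sum_marginal, hp1]

end Marginal

theorem finner_ghz3d_fidelity_bound_general (d : ℕ)
    (ρ : Matrix (Fin 3 → Fin d) (Fin 3 → Fin d) ℂ)
    (hρ : ρ.PosSemidef) (htr : ρ.trace = 1)
    (hfinner : ∀ i j k : Fin d,
      (ρ ![i, j, k] ![i, j, k]).re ≤
        Real.sqrt
          ((∑ x : Fin 3 → Fin d, if x 0 = i then (ρ x x).re else 0) *
            (∑ x : Fin 3 → Fin d, if x 1 = j then (ρ x x).re else 0) *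
            (∑ x : Fin 3 → Fin d, if x 2 = k then (ρ x x).re else 0))) :
    (star (ghzVec 3 d) ⬝ᵥ ρ *ᵥ ghzVec 3 d).re ≤ 1 / Real.sqrt d := by
  set c : Fin d → Fin 3 → Fin d := fun i _ => i
  set p : (Fin 3 → Fin d) → ℝ := fun x => (ρ x x).re
  have hp : ∀ x, 0 ≤ p x := fun x => (Complex.nonneg_iff.mp hρ.diag_nonneg).1
  have hp1 : ∑ x, p x = 1 := by simpa [p, trace, Complex.re_sum] using congrArg Complex.re htr
  have hq : ∀ i, (ρ (c i) (c i)).re ≤ √(marginal p 0 i * marginal p 1 i * marginal p 2 i) := by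
    intro i
    have hc : ![i, i, i] = c i := by ext k; fin_cases k <;> rfl
    rw [← hc]
    exact hfinner i i i
  calc (star (ghzVec 3 d) ⬝ᵥ ρ *ᵥ ghzVec 3 d).re
      = (d : ℝ)⁻¹ * (∑ i, ∑ j, ρ.submatrix c c i j).re := by
        rw [star_dotProduct_mulVec_ghzVec, ← Complex.ofReal_natCast, ← Complex.ofReal_inv,
          Complex.re_ofReal_mul]
        rfl
    _ ≤ (d : ℝ)⁻¹ * (∑ i, √(ρ (c i) (c i)).re) ^ 2 := by
        gcongr
        exact (hρ.submatrix c).re_sum_sum_le_sq_sum_sqrt_diag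
    _ ≤ (d : ℝ)⁻¹ * √√(Fintype.card (Fin d)) ^ 2 := by
        gcongr
        exact sum_sqrt_le_of_le_sqrt_marginal hp hp1 0 1 2 hq
    _ = 1 / √d := by
        rw [Fintype.card_fin, Real.sq_sqrt (Real.sqrt_nonneg _), inv_mul_eq_div,
          Real.sqrt_div_self']

/-- a tripartite density matrix (with `d`-level parties, `d ≥ 2`) whose
computational-basis outcome distribution satisfies the Finner inequality has
`GHZ_{3,d}` fidelity at most `1/√d`. -/
theorem finner_ghz3d_fidelity_bound (d : ℕ) (hd : 2 ≤ d)
    (ρ : Matrix (Fin 3 → Fin d) (Fin 3 → Fin d) ℂ)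
    (hρ : ρ.PosSemidef) (htr : ρ.trace = 1)
    (hfinner : ∀ i j k : Fin d,
      (ρ ![i, j, k] ![i, j, k]).re ≤
        Real.sqrt
          ((∑ x : Fin 3 → Fin d, if x 0 = i then (ρ x x).re else 0) *
            (∑ x : Fin 3 → Fin d, if x 1 = j then (ρ x x).re else 0) *
            (∑ x : Fin 3 → Fin d, if x 2 = k then (ρ x x).re else 0))) :
    (star (ghzVec 3 d) ⬝ᵥ ρ *ᵥ ghzVec 3 d).re ≤ 1 / Real.sqrt d :=
  finner_ghz3d_fidelity_bound_general d ρ hρ htr hfinner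
end
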